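/- arXiv:math/0210461 — 4 statements merged into one kernel-verified Lean document; each statement's English description precedes it below -/
import Mathlib

section
/- Let k be a field, H a commutative Hopf algebra over k with bijective antipode, and N a left-right Yetter-Drinfeld module over H that is finitely generated and projective as a left H-module. Then the functor P ↦ Hom_H(N, P) from the category of Yetter-Drinfeld modules to itself preserves injective objects. -/
/-!
Common definitions for formalizing "Semisimplicity of the categories of
Yetter-Drinfeld modules and Long dimodules" (Caenepeel, Guédénon).
-/

open TensorProduct

noncomputable section
namespace YDPaper

section RingPart

variable (k H : Type) [CommRing k] [Ring H] [HopfAlgebra k H]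

/-- `ρ : M →ₗ[k] M ⊗[k] H` is a (coassociative, counital) right `H`-comodule
structure on `M`. -/
def IsComod {M : Type} [AddCommGroup M] [Module k M] (ρ : M →ₗ[k] M ⊗[k] H) : Prop :=
  (∀ m : M, (TensorProduct.rid k M)
      ((LinearMap.lTensor M (Coalgebra.counit (R := k) (A := H))) (ρ m)) = m) ∧
  (∀ m : M, (TensorProduct.assoc k M H H) ((LinearMap.rTensor H ρ) (ρ m)) =
      (LinearMap.lTensor M (Coalgebra.comul (R := k) (A := H))) (ρ m))

/-- The iterated comultiplication `h ↦ (h₁ ⊗ h₂) ⊗ h₃`. -/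
def Delta2 : H →ₗ[k] (H ⊗[k] H) ⊗[k] H :=
  (LinearMap.rTensor H (Coalgebra.comul (R := k) (A := H))).comp
    (Coalgebra.comul (R := k) (A := H))

/-- The Yetter-Drinfeld compatibility condition
`ρ(h • m) = h₂ • m₀ ⊗ h₃ m₁ S⁻¹(h₁)`, expressed via arbitrary Sweedler
decompositions of `Δ²(h)` and `ρ(m)` into finite sums of pure tensors. -/
def IsYDCompat (Sinv : H →ₗ[k] H) {M : Type} [AddCommGroup M] [Module k M] [Module H M]
    (ρ : M →ₗ[k] M ⊗[k] H) : Prop :=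
  ∀ (h : H) (m : M) (s t : Finset ℕ) (a b c : ℕ → H) (m₀ : ℕ → M) (m₁ : ℕ → H),
    (∑ i ∈ s, (a i ⊗ₜ[k] b i) ⊗ₜ[k] c i) = Delta2 k H h →
    (∑ j ∈ t, m₀ j ⊗ₜ[k] m₁ j) = ρ m →
    ρ (h • m) = ∑ i ∈ s, ∑ j ∈ t, (b i • m₀ j) ⊗ₜ[k] (c i * m₁ j * Sinv (a i))

/-- The `k`-linear map `m ↦ h • m`. -/
def smulMap {M : Type} [AddCommGroup M] [Module k M] [Module H M] [SMulCommClass H k M]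
    (h : H) : M →ₗ[k] M where
  toFun m := h • m
  map_add' := smul_add h
  map_smul' c m := (smul_comm h c m)

/-- The Long dimodule compatibility condition `ρ(h • m) = h • m₀ ⊗ m₁`. -/
def IsLongCompat {M : Type} [AddCommGroup M] [Module k M] [Module H M] [SMulCommClass H k M]
    (ρ : M →ₗ[k] M ⊗[k] H) : Prop :=
  ∀ (h : H) (m : M), ρ (h • m) = (LinearMap.rTensor H (smulMap k H h)) (ρ m)

/-- Morphisms in the categories of Yetter-Drinfeld modules and of Long dimodules:
`H`-linear and `H`-colinear maps. -/
def IsHom {A B : Type} [AddCommGroup A] [Module k A] [Module H A]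
    [AddCommGroup B] [Module k B] [Module H B]
    (ρA : A →ₗ[k] A ⊗[k] H) (ρB : B →ₗ[k] B ⊗[k] H) (f : A →ₗ[k] B) : Prop :=
  (∀ (h : H) (a : A), f (h • a) = h • f a) ∧
  ρB.comp f = (LinearMap.rTensor H f).comp ρA

/-- `H`-colinearity of a `k`-linear map between right `H`-comodules. -/
def IsColin {A B : Type} [AddCommGroup A] [Module k A]
    [AddCommGroup B] [Module k B]
    (ρA : A →ₗ[k] A ⊗[k] H) (ρB : B →ₗ[k] B ⊗[k] H) (f : A →ₗ[k] B) : Prop :=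
  ρB.comp f = (LinearMap.rTensor H f).comp ρA

/-- A bundled left-right Yetter-Drinfeld module over `H` (with chosen inverse `Sinv`
of the antipode). -/
structure YDCat (Sinv : H →ₗ[k] H) where
  M : Type
  [iAdd : AddCommGroup M]
  [iModk : Module k M]
  [iModH : Module H M]
  [iTower : IsScalarTower k H M]
  [iComm : SMulCommClass H k M]
  ρ : M →ₗ[k] M ⊗[k] H
  comod : IsComod k H ρ
  compat : IsYDCompat k H Sinv ρ

attribute [instance] YDCat.iAdd YDCat.iModk YDCat.iModH YDCat.iTower YDCat.iComm

/-- A bundled left-right Long dimodule over `H`. -/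
structure LongCat where
  M : Type
  [iAdd : AddCommGroup M]
  [iModk : Module k M]
  [iModH : Module H M]
  [iTower : IsScalarTower k H M]
  [iComm : SMulCommClass H k M]
  ρ : M →ₗ[k] M ⊗[k] H
  comod : IsComod k H ρ
  compat : IsLongCompat k H ρ

attribute [instance] LongCat.iAdd LongCat.iModk LongCat.iModH LongCat.iTower LongCat.iComm

/-- A bundled right `H`-comodule. -/
structure ComodCat where
  V : Type
  [iAdd : AddCommGroup V]
  [iModk : Module k V]
  ρ : V →ₗ[k] V ⊗[k] H
  comod : IsComod k H ρ

attribute [instance] ComodCat.iAdd ComodCat.iModk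

section Subobjects

variable {k H}
variable {M : Type} [AddCommGroup M] [Module k M] [Module H M] [IsScalarTower k H M]

/-- A subobject in the category of Yetter-Drinfeld modules (or Long dimodules):
an `H`-submodule which is stable under the coaction, i.e. `ρ(p) ⊆ p ⊗ H`. -/
def IsSubobject (ρ : M →ₗ[k] M ⊗[k] H) (p : Submodule H M) : Prop :=
  ∀ m ∈ p, ρ m ∈ LinearMap.range (LinearMap.rTensor H (p.restrictScalars k).subtype)

/-- A simple subobject: a nonzero coaction-stable `H`-submodule with no proper
nonzero coaction-stable `H`-submodules. -/
def IsSimpleSubobject (ρ : M →ₗ[k] M ⊗[k] H) (p : Submodule H M) : Prop :=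
  IsSubobject ρ p ∧ p ≠ ⊥ ∧
    ∀ q : Submodule H M, IsSubobject ρ q → q ≤ p → q = ⊥ ∨ q = p

/-- `M` is the (internal) direct sum of a family of simple subobjects which are
finitely generated as `H`-modules. -/
def IsSemisimpleObj (ρ : M →ₗ[k] M ⊗[k] H) : Prop :=
  ∃ (ι : Type) (S : ι → Submodule H M),
    (∀ i, IsSimpleSubobject ρ (S i) ∧ (S i).FG) ∧
    iSupIndep S ∧ (⨆ i, S i) = ⊤

end Subobjects

section Subcomodules

variable {k H}
variable {V : Type} [AddCommGroup V] [Module k V]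

/-- A subcomodule: a `k`-submodule stable under the coaction. -/
def IsSubcomod (ρ : V →ₗ[k] V ⊗[k] H) (p : Submodule k V) : Prop :=
  ∀ v ∈ p, ρ v ∈ LinearMap.range (LinearMap.rTensor H p.subtype)

/-- A simple subcomodule. -/
def IsSimpleSubcomod (ρ : V →ₗ[k] V ⊗[k] H) (p : Submodule k V) : Prop :=
  IsSubcomod ρ p ∧ p ≠ ⊥ ∧
    ∀ q : Submodule k V, IsSubcomod ρ q → q ≤ p → q = ⊥ ∨ q = p

/-- A comodule is semisimple if it is the internal direct sum of a family of simple
subcomodules. -/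
def IsSemisimpleComod (ρ : V →ₗ[k] V ⊗[k] H) : Prop :=
  ∃ (ι : Type) (S : ι → Submodule k V),
    (∀ i, IsSimpleSubcomod ρ (S i)) ∧ iSupIndep S ∧ (⨆ i, S i) = ⊤

end Subcomodules

/-- `H` is cosemisimple: every right `H`-comodule is a direct sum of simple
subcomodules. -/
def Cosemisimple : Prop := ∀ C : ComodCat k H, IsSemisimpleComod C.ρ

section Coinv

variable {k H}
variable {A B : Type} [AddCommGroup A] [Module k A] [AddCommGroup B] [Module k B]

/-- The coinvariants `M^{co H} = { m | ρ m = m ⊗ 1 }` of a right `H`-comodule. -/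
def coinv (ρ : A →ₗ[k] A ⊗[k] H) : Submodule k A :=
  LinearMap.ker (ρ - (TensorProduct.mk k A H).flip 1)

lemma mem_coinv {ρ : A →ₗ[k] A ⊗[k] H} {a : A} :
    a ∈ coinv ρ ↔ ρ a = a ⊗ₜ[k] (1 : H) := by
  simp [coinv, LinearMap.mem_ker, sub_eq_zero]

/-- The map induced on coinvariants by an `H`-colinear map. -/
def coinvMap {ρA : A →ₗ[k] A ⊗[k] H} {ρB : B →ₗ[k] B ⊗[k] H} (f : A →ₗ[k] B)
    (hf : IsColin k H ρA ρB f) : ↥(coinv ρA) →ₗ[k] ↥(coinv ρB) :=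
  f.restrict (fun a ha => by
    have h1 : ρA a = a ⊗ₜ[k] (1 : H) := mem_coinv.1 ha
    have h2 : ρB (f a) = (LinearMap.rTensor H f) (ρA a) := by
      have := congrArg (fun (g : A →ₗ[k] B ⊗[k] H) => g a) hf
      simpa using this
    rw [mem_coinv, h2, h1, LinearMap.rTensor_tmul])

end Coinv

/-- Exactness of the coinvariants functor on the category of Yetter-Drinfeld
modules. -/
def CoinvExactYD (Sinv : H →ₗ[k] H) : Prop :=
  ∀ (A B C : YDCat k H Sinv) (f : A.M →ₗ[k] B.M) (g : B.M →ₗ[k] C.M)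
    (hf : IsHom k H A.ρ B.ρ f) (hg : IsHom k H B.ρ C.ρ g),
    Function.Injective f → Function.Surjective g →
    LinearMap.range f = LinearMap.ker g →
    Function.Injective (coinvMap f hf.2) ∧
    LinearMap.range (coinvMap f hf.2) = LinearMap.ker (coinvMap g hg.2) ∧
    Function.Surjective (coinvMap g hg.2)

/-- Exactness of the coinvariants functor on the category of right `H`-comodules. -/
def CoinvExactComod : Prop :=
  ∀ (A B C : ComodCat k H) (f : A.V →ₗ[k] B.V) (g : B.V →ₗ[k] C.V)
    (hf : IsColin k H A.ρ B.ρ f) (hg : IsColin k H B.ρ C.ρ g),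
    Function.Injective f → Function.Surjective g →
    LinearMap.range f = LinearMap.ker g →
    Function.Injective (coinvMap f hf) ∧
    LinearMap.range (coinvMap f hf) = LinearMap.ker (coinvMap g hg) ∧
    Function.Surjective (coinvMap g hg)

section Eval

variable {k H}
variable {M N : Type} [AddCommGroup M] [Module k M] [Module H M]
  [IsScalarTower k H M] [SMulCommClass H k M]
  [AddCommGroup N] [Module k N] [Module H N] [IsScalarTower k H N] [SMulCommClass H k N]

/-- Evaluation at `m` of `H`-linear maps, as a `k`-linear map. -/
def evalAtH (m : M) : (M →ₗ[H] N) →ₗ[k] N where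
  toFun f := f m
  map_add' _ _ := rfl
  map_smul' _ _ := rfl

/-- Evaluation at `m` of `k`-linear maps, as a `k`-linear map. -/
def evalAtK {V : Type} [AddCommGroup V] [Module k V] (v : V) :
    (V →ₗ[k] N) →ₗ[k] N where
  toFun f := f v
  map_add' _ _ := rfl
  map_smul' _ _ := rfl

/-- Contraction `N ⊗ H → N` along a functional `φ : H → k`. -/
def contract (φ : H →ₗ[k] k) : N ⊗[k] H →ₗ[k] N :=
  (TensorProduct.rid k N).toLinearMap.comp (LinearMap.lTensor N φ)

/-- Post-composition with an `H`-linear map, as a `k`-linear map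
`Hom_H(X, M) → Hom_H(X, N)`; here `X` is the (implicit) source. -/
def postcompH {X : Type} [AddCommGroup X] [Module k X] [Module H X]
    [IsScalarTower k H X] [SMulCommClass H k X]
    (f : M →ₗ[k] N) (hf : ∀ (h : H) (m : M), f (h • m) = h • f m) :
    (X →ₗ[H] M) →ₗ[k] (X →ₗ[H] N) where
  toFun φ :=
    { toFun := fun x => f (φ x)
      map_add' := fun x y => by simp
      map_smul' := fun h x => by simp [hf] }
  map_add' φ ψ := by ext x; simp
  map_smul' c φ := by ext x; simp

end Eval

/-- Condition (†) for the category of Yetter-Drinfeld modules: for every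
Yetter-Drinfeld module `X` which is finitely generated as a left `H`-module,
the functor `Hom_H(X, -)` is exact on the category of Yetter-Drinfeld modules. -/
def DaggerYD (Sinv : H →ₗ[k] H) : Prop :=
  ∀ X : YDCat k H Sinv, Module.Finite H X.M →
  ∀ (A B C : YDCat k H Sinv) (f : A.M →ₗ[k] B.M) (g : B.M →ₗ[k] C.M)
    (hf : IsHom k H A.ρ B.ρ f) (hg : IsHom k H B.ρ C.ρ g),
    Function.Injective f → Function.Surjective g →
    LinearMap.range f = LinearMap.ker g →
    Function.Injective (postcompH (X := X.M) f hf.1) ∧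
    LinearMap.range (postcompH (X := X.M) f hf.1) =
      LinearMap.ker (postcompH (X := X.M) g hg.1) ∧
    Function.Surjective (postcompH (X := X.M) g hg.1)

/-- Condition (†) for the category of Long dimodules. -/
def DaggerLong : Prop :=
  ∀ X : LongCat k H, Module.Finite H X.M →
  ∀ (A B C : LongCat k H) (f : A.M →ₗ[k] B.M) (g : B.M →ₗ[k] C.M)
    (hf : IsHom k H A.ρ B.ρ f) (hg : IsHom k H B.ρ C.ρ g),
    Function.Injective f → Function.Surjective g →
    LinearMap.range f = LinearMap.ker g →
    Function.Injective (postcompH (X := X.M) f hf.1) ∧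
    LinearMap.range (postcompH (X := X.M) f hf.1) =
      LinearMap.ker (postcompH (X := X.M) g hg.1) ∧
    Function.Surjective (postcompH (X := X.M) g hg.1)

/-- Projective object in the category of Yetter-Drinfeld modules. -/
def IsProjectiveYD (Sinv : H →ₗ[k] H) (P : YDCat k H Sinv) : Prop :=
  ∀ (A B : YDCat k H Sinv) (g : A.M →ₗ[k] B.M) (f : P.M →ₗ[k] B.M),
    IsHom k H A.ρ B.ρ g → Function.Surjective g → IsHom k H P.ρ B.ρ f →
    ∃ l : P.M →ₗ[k] A.M, IsHom k H P.ρ A.ρ l ∧ g.comp l = f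

/-- Projective object in the category of Long dimodules. -/
def IsProjectiveLong (P : LongCat k H) : Prop :=
  ∀ (A B : LongCat k H) (g : A.M →ₗ[k] B.M) (f : P.M →ₗ[k] B.M),
    IsHom k H A.ρ B.ρ g → Function.Surjective g → IsHom k H P.ρ B.ρ f →
    ∃ l : P.M →ₗ[k] A.M, IsHom k H P.ρ A.ρ l ∧ g.comp l = f

/-- Injective object in the category of Yetter-Drinfeld modules. -/
def IsInjectiveYD (Sinv : H →ₗ[k] H) (I : YDCat k H Sinv) : Prop :=
  ∀ (A B : YDCat k H Sinv) (ι : A.M →ₗ[k] B.M) (f : A.M →ₗ[k] I.M),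
    IsHom k H A.ρ B.ρ ι → Function.Injective ι → IsHom k H A.ρ I.ρ f →
    ∃ g : B.M →ₗ[k] I.M, IsHom k H B.ρ I.ρ g ∧ g.comp ι = f

/-- Projective object in the category of right `H`-comodules. -/
def IsProjectiveComod (P : ComodCat k H) : Prop :=
  ∀ (A B : ComodCat k H) (g : A.V →ₗ[k] B.V) (f : P.V →ₗ[k] B.V),
    IsColin k H A.ρ B.ρ g → Function.Surjective g → IsColin k H P.ρ B.ρ f →
    ∃ l : P.V →ₗ[k] A.V, IsColin k H P.ρ A.ρ l ∧ g.comp l = f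

section HomLemmas

variable {k H}
variable {A B C : Type} [AddCommGroup A] [Module k A] [Module H A]
  [AddCommGroup B] [Module k B] [Module H B]
  [AddCommGroup C] [Module k C] [Module H C]

lemma IsHom.comp' {ρA : A →ₗ[k] A ⊗[k] H} {ρB : B →ₗ[k] B ⊗[k] H} {ρC : C →ₗ[k] C ⊗[k] H}
    {f : A →ₗ[k] B} {g : B →ₗ[k] C}
    (hf : IsHom k H ρA ρB f) (hg : IsHom k H ρB ρC g) :
    IsHom k H ρA ρC (g.comp f) := by
  refine ⟨fun h a => by simp [LinearMap.comp_apply, hf.1, hg.1], ?_⟩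
  calc ρC.comp (g.comp f) = (ρC.comp g).comp f := by rw [LinearMap.comp_assoc]
    _ = ((LinearMap.rTensor H g).comp ρB).comp f := by rw [hg.2]
    _ = (LinearMap.rTensor H g).comp (ρB.comp f) := by rw [LinearMap.comp_assoc]
    _ = (LinearMap.rTensor H g).comp ((LinearMap.rTensor H f).comp ρA) := by rw [hf.2]
    _ = ((LinearMap.rTensor H g).comp (LinearMap.rTensor H f)).comp ρA := by
          rw [LinearMap.comp_assoc]
    _ = (LinearMap.rTensor H (g.comp f)).comp ρA := by rw [LinearMap.rTensor_comp]

end HomLemmas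

section HomYD

variable {k H}
variable (Sinv : H →ₗ[k] H)

/-- The `k`-module of morphisms of Yetter-Drinfeld modules `Hom_H^H(A, B)`, as a
submodule of the `k`-linear maps. -/
def homYD (A B : YDCat k H Sinv) : Submodule k (A.M →ₗ[k] B.M) where
  carrier := {f | IsHom k H A.ρ B.ρ f}
  add_mem' := by
    rintro f g ⟨hf1, hf2⟩ ⟨hg1, hg2⟩
    refine ⟨fun h a => by simp [hf1, hg1, smul_add], ?_⟩
    rw [LinearMap.comp_add, LinearMap.rTensor_add, LinearMap.add_comp, hf2, hg2]
  zero_mem' := by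
    refine ⟨fun h a => by simp, ?_⟩
    rw [LinearMap.comp_zero, LinearMap.rTensor_zero, LinearMap.zero_comp]
  smul_mem' := by
    rintro c f ⟨hf1, hf2⟩
    refine ⟨fun h a => by
      rw [LinearMap.smul_apply, LinearMap.smul_apply, hf1, smul_comm], ?_⟩
    rw [LinearMap.comp_smul, LinearMap.rTensor_smul, LinearMap.smul_comp, hf2]

/-- Post-composition with a morphism of Yetter-Drinfeld modules, as a `k`-linear map
between morphism spaces. -/
def postcompYD {X B C : YDCat k H Sinv}
    (g : B.M →ₗ[k] C.M) (hg : IsHom k H B.ρ C.ρ g) :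
    ↥(homYD Sinv X B) →ₗ[k] ↥(homYD Sinv X C) where
  toFun f := ⟨g.comp f.1, IsHom.comp' f.2 hg⟩
  map_add' f g' := by ext x; simp
  map_smul' c f := by ext x; simp

/-- An injective resolution `0 → X → I⁰ → I¹ → ⋯` in the category of
Yetter-Drinfeld modules. -/
structure IsInjRes (X : YDCat k H Sinv) (I : ℕ → YDCat k H Sinv)
    (ε : X.M →ₗ[k] (I 0).M) (d : ∀ n, (I n).M →ₗ[k] (I (n + 1)).M) : Prop where
  eps_hom : IsHom k H X.ρ (I 0).ρ ε
  d_hom : ∀ n, IsHom k H (I n).ρ (I (n + 1)).ρ (d n)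
  inj : ∀ n, IsInjectiveYD k H Sinv (I n)
  mono : Function.Injective ε
  exact0 : LinearMap.range ε = LinearMap.ker (d 0)
  exact : ∀ n, LinearMap.range (d n) = LinearMap.ker (d (n + 1))

/-- A projective resolution `⋯ → P₁ → P₀ → X → 0` in the category of
Yetter-Drinfeld modules. -/
structure IsProjRes (X : YDCat k H Sinv) (P : ℕ → YDCat k H Sinv)
    (ε : (P 0).M →ₗ[k] X.M) (d : ∀ n, (P (n + 1)).M →ₗ[k] (P n).M) : Prop where
  eps_hom : IsHom k H (P 0).ρ X.ρ ε
  d_hom : ∀ n, IsHom k H (P (n + 1)).ρ (P n).ρ (d n)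
  proj : ∀ n, IsProjectiveYD k H Sinv (P n)
  epi : Function.Surjective ε
  exact0 : LinearMap.range (d 0) = LinearMap.ker ε
  exact : ∀ n, LinearMap.range (d (n + 1)) = LinearMap.ker (d n)

/-- The projective dimension of `X` in the category of Yetter-Drinfeld modules is
at most `n`. -/
def pdimLE (X : YDCat k H Sinv) (n : ℕ) : Prop :=
  ∃ (P : ℕ → YDCat k H Sinv) (ε : (P 0).M →ₗ[k] X.M)
    (d : ∀ m, (P (m + 1)).M →ₗ[k] (P m).M),
    IsProjRes Sinv X P ε d ∧ ∀ i, n < i → Subsingleton (P i).M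

/-- The injective dimension of `X` in the category of Yetter-Drinfeld modules is
at most `n`. -/
def injdimLE (X : YDCat k H Sinv) (n : ℕ) : Prop :=
  ∃ (I : ℕ → YDCat k H Sinv) (ε : X.M →ₗ[k] (I 0).M)
    (d : ∀ m, (I m).M →ₗ[k] (I (m + 1)).M),
    IsInjRes Sinv X I ε d ∧ ∀ i, n < i → Subsingleton (I i).M

/-- The complex `Hom(X, I⁰) → Hom(X, I¹) → ⋯` of morphism spaces induced by a
cochain of Yetter-Drinfeld modules. -/
def homCx (X : YDCat k H Sinv) (I : ℕ → YDCat k H Sinv)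
    (d : ∀ n, (I n).M →ₗ[k] (I (n + 1)).M)
    (hd : ∀ n, IsHom k H (I n).ρ (I (n + 1)).ρ (d n)) (n : ℕ) :
    ↥(homYD Sinv X (I n)) →ₗ[k] ↥(homYD Sinv X (I (n + 1))) :=
  postcompYD Sinv (d n) (hd n)

/-- Coboundaries of the induced complex. -/
def boundaries (X : YDCat k H Sinv) (I : ℕ → YDCat k H Sinv)
    (d : ∀ n, (I n).M →ₗ[k] (I (n + 1)).M)
    (hd : ∀ n, IsHom k H (I n).ρ (I (n + 1)).ρ (d n)) :
    ∀ i, Submodule k ↥(homYD Sinv X (I i))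
  | 0 => ⊥
  | (i + 1) => LinearMap.range (homCx Sinv X I d hd i)

/-- The `i`-th cohomology (cocycles modulo coboundaries) of the complex
`Hom(X, I⁰) → Hom(X, I¹) → ⋯`; when `I` is an injective resolution of `Y`, this is
`Ext^i(X, Y)`, the `i`-th right derived functor of `Hom_H^H(X, -)`, in the category
of Yetter-Drinfeld modules. -/
abbrev cohomology (X : YDCat k H Sinv) (I : ℕ → YDCat k H Sinv)
    (d : ∀ n, (I n).M →ₗ[k] (I (n + 1)).M)
    (hd : ∀ n, IsHom k H (I n).ρ (I (n + 1)).ρ (d n)) (i : ℕ) : Type :=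
  ↥(Submodule.map (boundaries Sinv X I d hd i).mkQ
      (LinearMap.ker (homCx Sinv X I d hd i)))

end HomYD

section CharProps

variable {k H}
variable (Sinv : H →ₗ[k] H)

/-- Characterizing property of the coaction on `Hom_H(A, B)` for Yetter-Drinfeld
modules `A`, `B`: it is determined by `f₀(m) ⊗ f₁ = f(m₀)₀ ⊗ f(m₀)₁ S(m₁)`. -/
def HomCoactChar (A B : YDCat k H Sinv)
    (ρQ : (A.M →ₗ[H] B.M) →ₗ[k] (A.M →ₗ[H] B.M) ⊗[k] H) : Prop :=
  ∀ (f : A.M →ₗ[H] B.M) (m : A.M) (t : Finset ℕ) (m₀ : ℕ → A.M) (m₁ : ℕ → H),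
    (∑ j ∈ t, m₀ j ⊗ₜ[k] m₁ j) = A.ρ m →
    (LinearMap.rTensor H (evalAtH (N := B.M) m)) (ρQ f) =
      ∑ j ∈ t, (LinearMap.lTensor B.M
          (LinearMap.mulRight k (HopfAlgebra.antipode (R := k) (A := H) (m₁ j))))
        (B.ρ (f (m₀ j)))

/-- Characterizing property of the coaction on `Hom_k(V, B)` for a comodule `V` and
a Yetter-Drinfeld module `B`: `g₀(v) ⊗ g₁ = g(v₀)₀ ⊗ g(v₀)₁ S(v₁)`. -/
def HomKCoactChar (V : ComodCat k H) (B : YDCat k H Sinv)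
    (ρ' : (V.V →ₗ[k] B.M) →ₗ[k] (V.V →ₗ[k] B.M) ⊗[k] H) : Prop :=
  ∀ (g : V.V →ₗ[k] B.M) (v : V.V) (t : Finset ℕ) (v₀ : ℕ → V.V) (v₁ : ℕ → H),
    (∑ j ∈ t, v₀ j ⊗ₜ[k] v₁ j) = V.ρ v →
    (LinearMap.rTensor H (evalAtK (N := B.M) v)) (ρ' g) =
      ∑ j ∈ t, (LinearMap.lTensor B.M
          (LinearMap.mulRight k (HopfAlgebra.antipode (R := k) (A := H) (v₁ j))))
        (B.ρ (g (v₀ j)))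

/-- Characterizing property of the Yetter-Drinfeld coaction on `H ⊗ V`:
`ρ(h ⊗ v) = h₂ ⊗ v₀ ⊗ h₃ v₁ S⁻¹(h₁)`. -/
def HTensorYDChar (V : ComodCat k H)
    (ρT : (H ⊗[k] V.V) →ₗ[k] (H ⊗[k] V.V) ⊗[k] H) : Prop :=
  ∀ (h : H) (v : V.V) (s t : Finset ℕ) (a b c : ℕ → H) (v₀ : ℕ → V.V) (v₁ : ℕ → H),
    (∑ i ∈ s, (a i ⊗ₜ[k] b i) ⊗ₜ[k] c i) = Delta2 k H h →
    (∑ j ∈ t, v₀ j ⊗ₜ[k] v₁ j) = V.ρ v →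
    ρT (h ⊗ₜ[k] v) =
      ∑ i ∈ s, ∑ j ∈ t, (b i ⊗ₜ[k] v₀ j) ⊗ₜ[k] (c i * v₁ j * Sinv (a i))

/-- Characterizing property of the Long dimodule coaction on `H ⊗ V`:
`ρ(h ⊗ v) = h ⊗ v₀ ⊗ v₁`. -/
def HTensorLongChar (V : ComodCat k H)
    (ρT : (H ⊗[k] V.V) →ₗ[k] (H ⊗[k] V.V) ⊗[k] H) : Prop :=
  ∀ (h : H) (v : V.V) (t : Finset ℕ) (v₀ : ℕ → V.V) (v₁ : ℕ → H),
    (∑ j ∈ t, v₀ j ⊗ₜ[k] v₁ j) = V.ρ v →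
    ρT (h ⊗ₜ[k] v) = ∑ j ∈ t, (h ⊗ₜ[k] v₀ j) ⊗ₜ[k] v₁ j

end CharProps

end RingPart

section CommPart

variable {k H : Type} [CommRing k] [CommRing H] [HopfAlgebra k H] (Sinv : H →ₗ[k] H)

/-- Characterizing property of the Yetter-Drinfeld coaction on `M ⊗_H N`:
`ρ(m ⊗ n) = m₀ ⊗ n₀ ⊗ n₁ m₁` (for `H` commutative). -/
def TensorCoactChar (A B : YDCat k H Sinv)
    (ρT : (A.M ⊗[H] B.M) →ₗ[k] (A.M ⊗[H] B.M) ⊗[k] H) : Prop :=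
  ∀ (m : A.M) (n : B.M) (s t : Finset ℕ) (m₀ : ℕ → A.M) (m₁ : ℕ → H)
    (n₀ : ℕ → B.M) (n₁ : ℕ → H),
    (∑ i ∈ s, m₀ i ⊗ₜ[k] m₁ i) = A.ρ m →
    (∑ j ∈ t, n₀ j ⊗ₜ[k] n₁ j) = B.ρ n →
    ρT (m ⊗ₜ[H] n) =
      ∑ i ∈ s, ∑ j ∈ t, (m₀ i ⊗ₜ[H] n₀ j) ⊗ₜ[k] (n₁ j * m₁ i)

/-- Restriction along `v ↦ 1 ⊗ v`, i.e. the canonical map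
`Hom_H(H ⊗ V, N) → Hom_k(V, N)`, `f ↦ (v ↦ f(1 ⊗ v))`. -/
def resUnitMap (V : Type) [AddCommGroup V] [Module k V] (N : Type) [AddCommGroup N]
    [Module k N] [Module H N] [IsScalarTower k H N] [SMulCommClass H k N] :
    ((H ⊗[k] V) →ₗ[H] N) →ₗ[k] (V →ₗ[k] N) where
  toFun f := (f.restrictScalars k).comp ((TensorProduct.mk k H V) 1)
  map_add' f g := by ext v; rfl
  map_smul' c f := by ext v; rfl

end CommPart

section AuxComod
variable {k H : Type} [Field k] [CommRing H] [HopfAlgebra k H]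

/-- Every element of a tensor product is a finite `ℕ`-indexed sum of pure tensors. -/
lemma exists_rep {V W : Type} [AddCommGroup V] [Module k V] [AddCommGroup W] [Module k W]
    (x : V ⊗[k] W) :
    ∃ (t : Finset ℕ) (v : ℕ → V) (w : ℕ → W), (∑ i ∈ t, v i ⊗ₜ[k] w i) = x := by
  induction x with
  | zero => exact ⟨∅, 0, 0, by simp⟩
  | tmul v w => exact ⟨{0}, fun _ => v, fun _ => w, by simp⟩
  | add x y hx hy =>
    obtain ⟨s, v, w, hs⟩ := hx
    obtain ⟨t, v', w', ht⟩ := hy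
    refine ⟨s.image (fun i => 2 * i) ∪ t.image (fun i => 2 * i + 1),
      fun i => if i % 2 = 0 then v (i / 2) else v' (i / 2),
      fun i => if i % 2 = 0 then w (i / 2) else w' (i / 2), ?_⟩
    rw [Finset.sum_union]
    · rw [Finset.sum_image (by intro x _ y _ h; simp only at h; omega), Finset.sum_image (by intro x _ y _ h; simp only at h; omega)]
      have h1 : ∀ i, (2 * i) % 2 = 0 := by omega
      have h2 : ∀ i, (2 * i) / 2 = i := by omega
      have h3 : ∀ i, (2 * i + 1) % 2 = 1 := by omega
      have h4 : ∀ i, (2 * i + 1) / 2 = i := by omega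
      simp only [h1, h2, h3, h4, if_true, if_pos rfl]
      simp only [Nat.one_ne_zero, if_false, hs, ht]
    · rw [Finset.disjoint_left]
      intro a ha hb
      simp only [Finset.mem_image] at ha hb
      omega

/-- Triple version, with pure tensors of shape `(a ⊗ b) ⊗ c`. -/
lemma exists_rep3 {U V W : Type} [AddCommGroup U] [Module k U] [AddCommGroup V] [Module k V]
    [AddCommGroup W] [Module k W] (x : (U ⊗[k] V) ⊗[k] W) :
    ∃ (t : Finset ℕ) (a : ℕ → U) (b : ℕ → V) (c : ℕ → W),
      (∑ i ∈ t, (a i ⊗ₜ[k] b i) ⊗ₜ[k] c i) = x := by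
  induction x with
  | zero => exact ⟨∅, 0, 0, 0, by simp⟩
  | tmul u w =>
    obtain ⟨s, a, b, hs⟩ := exists_rep u
    exact ⟨s, a, b, fun _ => w, by rw [← TensorProduct.sum_tmul, hs]⟩
  | add x y hx hy =>
    obtain ⟨s, a, b, c, hs⟩ := hx
    obtain ⟨t, a', b', c', ht⟩ := hy
    refine ⟨s.image (fun i => 2 * i) ∪ t.image (fun i => 2 * i + 1),
      fun i => if i % 2 = 0 then a (i / 2) else a' (i / 2),
      fun i => if i % 2 = 0 then b (i / 2) else b' (i / 2),
      fun i => if i % 2 = 0 then c (i / 2) else c' (i / 2), ?_⟩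
    rw [Finset.sum_union]
    · rw [Finset.sum_image (by intro x _ y _ h; simp only at h; omega), Finset.sum_image (by intro x _ y _ h; simp only at h; omega)]
      have h1 : ∀ i, (2 * i) % 2 = 0 := by omega
      have h2 : ∀ i, (2 * i) / 2 = i := by omega
      have h3 : ∀ i, (2 * i + 1) % 2 = 1 := by omega
      have h4 : ∀ i, (2 * i + 1) / 2 = i := by omega
      simp only [h1, h2, h3, h4, if_true, if_pos rfl]
      simp only [Nat.one_ne_zero, if_false, hs, ht]
    · rw [Finset.disjoint_left]
      intro a ha hb
      simp only [Finset.mem_image] at ha hb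
      omega

variable {M : Type} [AddCommGroup M] [Module k M] {ρ : M →ₗ[k] M ⊗[k] H}

lemma counit_rep (hρ : IsComod k H ρ) {n : M} {t : Finset ℕ} {n₀ : ℕ → M} {n₁ : ℕ → H}
    (d : (∑ i ∈ t, n₀ i ⊗ₜ[k] n₁ i) = ρ n) :
    ∑ i ∈ t, Coalgebra.counit (R := k) (n₁ i) • n₀ i = n := by
  have h := hρ.1 n
  rw [← d, map_sum, map_sum] at h
  simpa using h

lemma coassoc_rep (hρ : IsComod k H ρ) {n : M} {t : Finset ℕ} {n₀ : ℕ → M} {n₁ : ℕ → H}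
    (d : (∑ i ∈ t, n₀ i ⊗ₜ[k] n₁ i) = ρ n)
    {t' : ℕ → Finset ℕ} {u : ℕ → ℕ → M} {v : ℕ → ℕ → H}
    (d' : ∀ i ∈ t, (∑ j ∈ t' i, u i j ⊗ₜ[k] v i j) = ρ (n₀ i)) :
    ∑ i ∈ t, ∑ j ∈ t' i, u i j ⊗ₜ[k] (v i j ⊗ₜ[k] n₁ i)
      = (LinearMap.lTensor M (Coalgebra.comul (R := k) (A := H))) (ρ n) := by
  have h := hρ.2 n
  rw [← h]
  conv_rhs => rw [← d]
  rw [map_sum, map_sum]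
  refine Finset.sum_congr rfl fun i hi => ?_
  rw [LinearMap.rTensor_tmul, ← d' i hi, TensorProduct.sum_tmul, map_sum]
  refine Finset.sum_congr rfl fun j hj => ?_
  simp

lemma collapse_lS (hρ : IsComod k H ρ) {n : M} {t : Finset ℕ} {n₀ : ℕ → M} {n₁ : ℕ → H}
    (d : (∑ i ∈ t, n₀ i ⊗ₜ[k] n₁ i) = ρ n)
    {t' : ℕ → Finset ℕ} {u : ℕ → ℕ → M} {v : ℕ → ℕ → H}
    (d' : ∀ i ∈ t, (∑ j ∈ t' i, u i j ⊗ₜ[k] v i j) = ρ (n₀ i)) :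
    ∑ i ∈ t, ∑ j ∈ t' i,
        u i j ⊗ₜ[k] (v i j * HopfAlgebra.antipode (R := k) (A := H) (n₁ i))
      = n ⊗ₜ[k] (1 : H) := by
  have h := congrArg (LinearMap.lTensor M ((LinearMap.mul' k H) ∘ₗ
      (LinearMap.lTensor H (HopfAlgebra.antipode (R := k) (A := H)))))
    (coassoc_rep hρ d d')
  rw [map_sum] at h
  simp only [map_sum, LinearMap.lTensor_tmul, LinearMap.comp_apply, LinearMap.mul'_apply] at h
  rw [h, ← LinearMap.comp_apply, ← LinearMap.lTensor_comp, LinearMap.comp_assoc]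
  rw [HopfAlgebra.mul_antipode_lTensor_comul]
  conv_lhs => rw [← d]
  rw [map_sum]
  simp only [LinearMap.lTensor_tmul, LinearMap.comp_apply, Algebra.linearMap_apply,
    Algebra.algebraMap_eq_smul_one, TensorProduct.tmul_smul, TensorProduct.smul_tmul']
  rw [← TensorProduct.sum_tmul, counit_rep hρ d]

lemma collapse_Sr (hρ : IsComod k H ρ) {n : M} {t : Finset ℕ} {n₀ : ℕ → M} {n₁ : ℕ → H}
    (d : (∑ i ∈ t, n₀ i ⊗ₜ[k] n₁ i) = ρ n)
    {t' : ℕ → Finset ℕ} {u : ℕ → ℕ → M} {v : ℕ → ℕ → H}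
    (d' : ∀ i ∈ t, (∑ j ∈ t' i, u i j ⊗ₜ[k] v i j) = ρ (n₀ i)) :
    ∑ i ∈ t, ∑ j ∈ t' i,
        u i j ⊗ₜ[k] (HopfAlgebra.antipode (R := k) (A := H) (v i j) * n₁ i)
      = n ⊗ₜ[k] (1 : H) := by
  have h := congrArg (LinearMap.lTensor M ((LinearMap.mul' k H) ∘ₗ
      (LinearMap.rTensor H (HopfAlgebra.antipode (R := k) (A := H)))))
    (coassoc_rep hρ d d')
  rw [map_sum] at h
  simp only [map_sum, LinearMap.lTensor_tmul, LinearMap.comp_apply, LinearMap.mul'_apply,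
    LinearMap.rTensor_tmul] at h
  rw [h, ← LinearMap.comp_apply, ← LinearMap.lTensor_comp, LinearMap.comp_assoc]
  rw [HopfAlgebra.mul_antipode_rTensor_comul]
  conv_lhs => rw [← d]
  rw [map_sum]
  simp only [LinearMap.lTensor_tmul, LinearMap.comp_apply, Algebra.linearMap_apply,
    Algebra.algebraMap_eq_smul_one, TensorProduct.tmul_smul, TensorProduct.smul_tmul']
  rw [← TensorProduct.sum_tmul, counit_rep hρ d]

lemma tensor_eq_zero_of_forall {V P' ι : Type} [AddCommGroup V] [Module k V]
    [AddCommGroup P'] [Module k P'] (T : ι → (V →ₗ[k] P'))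
    (hsep : ∀ v : V, (∀ i, T i v = 0) → v = 0)
    (x : V ⊗[k] H) (hx : ∀ i, LinearMap.rTensor H (T i) x = 0) : x = 0 := by
  classical
  set ι' := Module.Free.ChooseBasisIndex k H with hι'
  let b : Module.Basis ι' k H := Module.Free.chooseBasis k H
  let eV : V ⊗[k] H ≃ₗ[k] (ι' →₀ V) :=
    (TensorProduct.congr (LinearEquiv.refl k V) b.repr).trans
      (TensorProduct.finsuppScalarRight k k V ι')
  let eP : P' ⊗[k] H ≃ₗ[k] (ι' →₀ P') :=
    (TensorProduct.congr (LinearEquiv.refl k P') b.repr).trans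
      (TensorProduct.finsuppScalarRight k k P' ι')
  have hnat : ∀ (F : V →ₗ[k] P') (y : V ⊗[k] H) (j : ι'),
      eP (LinearMap.rTensor H F y) j = F (eV y j) := by
    intro F y j
    induction y with
    | zero => simp
    | tmul v h =>
      simp only [LinearMap.rTensor_tmul, eV, eP, LinearEquiv.trans_apply,
        TensorProduct.congr_tmul, LinearEquiv.refl_apply,
        TensorProduct.finsuppScalarRight_apply_tmul_apply, map_smul]
    | add y z hy hz => simp [map_add, hy, hz]
  have h0 : ∀ j : ι', eV x j = 0 := by
    intro j
    refine hsep _ fun i => ?_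
    rw [← hnat (T i) x j, hx i, map_zero]
    rfl
  have : eV x = 0 := Finsupp.ext h0
  have := congrArg eV.symm this
  simpa using this

end AuxComod

lemma sum4_swap {α : Type} [AddCommMonoid α] {s t : Finset ℕ} {sn sm : ℕ → Finset ℕ}
    (f : ℕ → ℕ → ℕ → ℕ → α) :
    ∑ i ∈ s, ∑ i' ∈ sn i, ∑ j ∈ t, ∑ j' ∈ sm j, f i i' j j' =
    ∑ j ∈ t, ∑ j' ∈ sm j, ∑ i ∈ s, ∑ i' ∈ sn i, f i i' j j' := by
  calc ∑ i ∈ s, ∑ i' ∈ sn i, ∑ j ∈ t, ∑ j' ∈ sm j, f i i' j j'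
      = ∑ i ∈ s, ∑ j ∈ t, ∑ i' ∈ sn i, ∑ j' ∈ sm j, f i i' j j' :=
        Finset.sum_congr rfl fun i _ => Finset.sum_comm
    _ = ∑ j ∈ t, ∑ i ∈ s, ∑ i' ∈ sn i, ∑ j' ∈ sm j, f i i' j j' := Finset.sum_comm
    _ = ∑ j ∈ t, ∑ i ∈ s, ∑ j' ∈ sm j, ∑ i' ∈ sn i, f i i' j j' :=
        Finset.sum_congr rfl fun j _ => Finset.sum_congr rfl fun i _ => Finset.sum_comm
    _ = ∑ j ∈ t, ∑ j' ∈ sm j, ∑ i ∈ s, ∑ i' ∈ sn i, f i i' j j' :=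
        Finset.sum_congr rfl fun j _ => Finset.sum_comm

section TensorYD
variable {k H : Type} [Field k] [CommRing H] [HopfAlgebra k H] {Sinv : H →ₗ[k] H}
variable (NN MM : YDCat k H Sinv)

/-- The canonical `k`-bilinear map to the tensor product over `H`. -/
def tmulH : NN.M →ₗ[k] MM.M →ₗ[k] (NN.M ⊗[H] MM.M) :=
  LinearMap.mk₂ k (fun n m => n ⊗ₜ[H] m)
    (fun a b m => TensorProduct.add_tmul a b m)
    (fun c n m => (TensorProduct.smul_tmul' c n m).symm)
    (fun n a b => TensorProduct.tmul_add n a b)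
    (fun c n m => TensorProduct.tmul_smul c n m)

/-- `h ⊗ h' ↦ h' * h`. -/
def mulFlip : H ⊗[k] H →ₗ[k] H :=
  (LinearMap.mul' k H) ∘ₗ (TensorProduct.comm k H H).toLinearMap

/-- The building block for the Yetter-Drinfeld coaction on `N ⊗[H] M`. -/
def tau2 : ((NN.M ⊗[k] H) ⊗[k] (MM.M ⊗[k] H)) →ₗ[k] (NN.M ⊗[H] MM.M) ⊗[k] H :=
  (TensorProduct.map (TensorProduct.lift (tmulH NN MM)) mulFlip) ∘ₗ
    (TensorProduct.tensorTensorTensorComm k NN.M H MM.M H).toLinearMap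

@[simp] lemma tau2_tmul (n : NN.M) (h : H) (m : MM.M) (h' : H) :
    tau2 NN MM ((n ⊗ₜ[k] h) ⊗ₜ[k] (m ⊗ₜ[k] h')) = (n ⊗ₜ[H] m) ⊗ₜ[k] (h' * h) := by
  simp [tau2, mulFlip, tmulH]

lemma tauAux_balance (h : H) (n : NN.M) (m : MM.M) :
    tau2 NN MM (NN.ρ (h • n) ⊗ₜ[k] MM.ρ m) = tau2 NN MM (NN.ρ n ⊗ₜ[k] MM.ρ (h • m)) := by
  obtain ⟨s, a, b, c, hD⟩ := exists_rep3 (Delta2 k H h)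
  obtain ⟨tn, n₀, n₁, hn⟩ := exists_rep (NN.ρ n)
  obtain ⟨tm, m₀, m₁, hm⟩ := exists_rep (MM.ρ m)
  rw [NN.compat h n s tn a b c n₀ n₁ hD hn, MM.compat h m s tm a b c m₀ m₁ hD hm,
    ← hn, ← hm]
  simp only [TensorProduct.sum_tmul, TensorProduct.tmul_sum, map_sum, tau2_tmul]
  rw [Finset.sum_comm]
  refine Finset.sum_congr rfl fun i _ => ?_
  refine Finset.sum_congr rfl fun j _ => ?_
  refine Finset.sum_congr rfl fun l _ => ?_
  rw [TensorProduct.smul_tmul]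
  congr 1
  ring

/-- The coaction building block as a `k`-bilinear map. -/
def tauBil : NN.M →ₗ[k] MM.M →ₗ[k] (NN.M ⊗[H] MM.M) ⊗[k] H :=
  LinearMap.mk₂ k (fun n m => tau2 NN MM (NN.ρ n ⊗ₜ[k] MM.ρ m))
    (fun n n' m => by rw [map_add, TensorProduct.add_tmul, map_add])
    (fun c n m => by rw [map_smul, ← TensorProduct.smul_tmul', map_smul])
    (fun n m m' => by rw [map_add, TensorProduct.tmul_add, map_add])
    (fun c n m => by rw [map_smul, TensorProduct.tmul_smul, map_smul])

/-- The Yetter-Drinfeld coaction on `N ⊗[H] M`, as an additive map. -/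
def tauAdd : (NN.M ⊗[H] MM.M) →+ (NN.M ⊗[H] MM.M) ⊗[k] H :=
  TensorProduct.liftAddHom
    { toFun := fun n => (tauBil NN MM n).toAddMonoidHom
      map_zero' := by ext m; simp
      map_add' := fun n n' => by ext m; simp }
    (fun h n m => tauAux_balance NN MM h n m)

lemma tauAdd_tmul (n : NN.M) (m : MM.M) :
    tauAdd NN MM (n ⊗ₜ[H] m) = tau2 NN MM (NN.ρ n ⊗ₜ[k] MM.ρ m) :=
  TensorProduct.liftAddHom_tmul _ _ n m

/-- The Yetter-Drinfeld coaction on `N ⊗[H] M`. -/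
def tau : (NN.M ⊗[H] MM.M) →ₗ[k] (NN.M ⊗[H] MM.M) ⊗[k] H where
  toFun := tauAdd NN MM
  map_add' x y := map_add _ x y
  map_smul' c x := by
    show tauAdd NN MM (c • x) = c • tauAdd NN MM x
    induction x with
    | zero => rw [smul_zero, map_zero, smul_zero]
    | tmul n m =>
      have h1 : c • (n ⊗ₜ[H] m) = (c • n) ⊗ₜ[H] m := TensorProduct.smul_tmul' c n m
      rw [h1, tauAdd_tmul, tauAdd_tmul, map_smul, ← TensorProduct.smul_tmul', map_smul]
    | add x y hx hy =>
      rw [smul_add, map_add, map_add, hx, hy, smul_add]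

lemma tau_tmul (n : NN.M) (m : MM.M) :
    tau NN MM (n ⊗ₜ[H] m) = tau2 NN MM (NN.ρ n ⊗ₜ[k] MM.ρ m) := tauAdd_tmul NN MM n m

lemma tau_rep {n : NN.M} {m : MM.M} {s : Finset ℕ} {n₀ : ℕ → NN.M} {n₁ : ℕ → H}
    (hn : (∑ i ∈ s, n₀ i ⊗ₜ[k] n₁ i) = NN.ρ n)
    {t : Finset ℕ} {m₀ : ℕ → MM.M} {m₁ : ℕ → H}
    (hm : (∑ j ∈ t, m₀ j ⊗ₜ[k] m₁ j) = MM.ρ m) :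
    tau NN MM (n ⊗ₜ[H] m) =
      ∑ i ∈ s, ∑ j ∈ t, (n₀ i ⊗ₜ[H] m₀ j) ⊗ₜ[k] (m₁ j * n₁ i) := by
  rw [tau_tmul, ← hn, ← hm]
  simp only [TensorProduct.sum_tmul, TensorProduct.tmul_sum, map_sum, tau2_tmul]
  rw [Finset.sum_comm]

/-- Four-fold multilinear helper for the coassociativity proof. -/
def theta : (NN.M ⊗[k] (H ⊗[k] H)) →ₗ[k] (MM.M ⊗[k] (H ⊗[k] H)) →ₗ[k]
    ((NN.M ⊗[H] MM.M) ⊗[k] (H ⊗[k] H)) :=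
  TensorProduct.curry ((TensorProduct.map (TensorProduct.lift (tmulH NN MM))
    ((LinearMap.mul' k (H ⊗[k] H)) ∘ₗ (TensorProduct.comm k _ _).toLinearMap)) ∘ₗ
    (TensorProduct.tensorTensorTensorComm k NN.M (H ⊗[k] H) MM.M (H ⊗[k] H)).toLinearMap)

@[simp] lemma theta_tmul (n : NN.M) (x y : H) (m : MM.M) (u v : H) :
    theta NN MM (n ⊗ₜ[k] (x ⊗ₜ[k] y)) (m ⊗ₜ[k] (u ⊗ₜ[k] v)) =
      (n ⊗ₜ[H] m) ⊗ₜ[k] ((u * x) ⊗ₜ[k] (v * y)) := by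
  simp [theta, tmulH, Algebra.TensorProduct.tmul_mul_tmul]

lemma tau_comod : IsComod k H (tau NN MM) := by
  constructor
  · intro x
    induction x with
    | zero => simp
    | add x y hx hy => rw [map_add, map_add, map_add, hx, hy]
    | tmul n m =>
      obtain ⟨s, n₀, n₁, hn⟩ := exists_rep (NN.ρ n)
      obtain ⟨t, m₀, m₁, hm⟩ := exists_rep (MM.ρ m)
      rw [tau_rep NN MM hn hm, map_sum, map_sum]
      simp only [map_sum, LinearMap.lTensor_tmul, TensorProduct.rid_tmul,
        Bialgebra.counit_mul]
      have key : ∀ i j, (Coalgebra.counit (R := k) (m₁ j) *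
            Coalgebra.counit (R := k) (n₁ i)) • (n₀ i ⊗ₜ[H] m₀ j) =
          (Coalgebra.counit (R := k) (n₁ i) • n₀ i) ⊗ₜ[H]
            (Coalgebra.counit (R := k) (m₁ j) • m₀ j) := by
        intro i j
        rw [mul_smul, TensorProduct.smul_tmul', ← TensorProduct.tmul_smul]
      simp only [key]
      calc ∑ i ∈ s, ∑ j ∈ t, (Coalgebra.counit (R := k) (n₁ i) • n₀ i) ⊗ₜ[H]
            (Coalgebra.counit (R := k) (m₁ j) • m₀ j)
          = ∑ i ∈ s, (Coalgebra.counit (R := k) (n₁ i) • n₀ i) ⊗ₜ[H]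
            (∑ j ∈ t, Coalgebra.counit (R := k) (m₁ j) • m₀ j) := by
            exact Finset.sum_congr rfl fun i _ => (TensorProduct.tmul_sum _ _ _).symm
        _ = (∑ i ∈ s, Coalgebra.counit (R := k) (n₁ i) • n₀ i) ⊗ₜ[H]
            (∑ j ∈ t, Coalgebra.counit (R := k) (m₁ j) • m₀ j) := by
            rw [TensorProduct.sum_tmul]
        _ = n ⊗ₜ[H] m := by rw [counit_rep NN.comod hn, counit_rep MM.comod hm]
  · intro x
    induction x with
    | zero => simp
    | add x y hx hy => rw [map_add, map_add, map_add, map_add, hx, hy]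
    | tmul n m =>
      obtain ⟨s, n₀, n₁, hn⟩ := exists_rep (NN.ρ n)
      obtain ⟨t, m₀, m₁, hm⟩ := exists_rep (MM.ρ m)
      choose sn nu nv hn' using fun i => exists_rep (NN.ρ (n₀ i))
      choose sm mu mv hm' using fun j => exists_rep (MM.ρ (m₀ j))
      choose cn cp cq hcn using fun i =>
        exists_rep (Coalgebra.comul (R := k) (A := H) (n₁ i))
      choose cm cu cv hcm using fun j =>
        exists_rep (Coalgebra.comul (R := k) (A := H) (m₁ j))
      have hXn : ∑ i ∈ s, ∑ i' ∈ sn i, nu i i' ⊗ₜ[k] (nv i i' ⊗ₜ[k] n₁ i)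
          = (LinearMap.lTensor NN.M (Coalgebra.comul (R := k) (A := H))) (NN.ρ n) :=
        coassoc_rep NN.comod hn (fun i _ => hn' i)
      have hXm : ∑ j ∈ t, ∑ j' ∈ sm j, mu j j' ⊗ₜ[k] (mv j j' ⊗ₜ[k] m₁ j)
          = (LinearMap.lTensor MM.M (Coalgebra.comul (R := k) (A := H))) (MM.ρ m) :=
        coassoc_rep MM.comod hm (fun j _ => hm' j)
      -- left side
      have EL : (TensorProduct.assoc k (NN.M ⊗[H] MM.M) H H)
            ((LinearMap.rTensor H (tau NN MM)) ((tau NN MM) (n ⊗ₜ[H] m)))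
          = theta NN MM ((LinearMap.lTensor NN.M (Coalgebra.comul (R := k) (A := H))) (NN.ρ n))
              ((LinearMap.lTensor MM.M (Coalgebra.comul (R := k) (A := H))) (MM.ρ m)) := by
        rw [tau_rep NN MM hn hm, ← hXn, ← hXm]
        rw [map_sum, map_sum]
        simp only [map_sum, LinearMap.rTensor_tmul, LinearMap.sum_apply]
        calc ∑ i ∈ s, ∑ j ∈ t, (TensorProduct.assoc k (NN.M ⊗[H] MM.M) H H)
              ((tau NN MM (n₀ i ⊗ₜ[H] m₀ j)) ⊗ₜ[k] (m₁ j * n₁ i))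
            = ∑ i ∈ s, ∑ j ∈ t, ∑ i' ∈ sn i, ∑ j' ∈ sm j,
                (nu i i' ⊗ₜ[H] mu j j') ⊗ₜ[k]
                  ((mv j j' * nv i i') ⊗ₜ[k] (m₁ j * n₁ i)) := by
              refine Finset.sum_congr rfl fun i _ => Finset.sum_congr rfl fun j _ => ?_
              rw [tau_rep NN MM (hn' i) (hm' j), TensorProduct.sum_tmul]
              rw [map_sum]
              refine Finset.sum_congr rfl fun i' _ => ?_
              rw [TensorProduct.sum_tmul, map_sum]
              refine Finset.sum_congr rfl fun j' _ => ?_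
              simp
          _ = ∑ i ∈ s, ∑ i' ∈ sn i, ∑ j ∈ t, ∑ j' ∈ sm j,
                theta NN MM (nu i i' ⊗ₜ[k] (nv i i' ⊗ₜ[k] n₁ i))
                  (mu j j' ⊗ₜ[k] (mv j j' ⊗ₜ[k] m₁ j)) := by
              refine Finset.sum_congr rfl fun i _ => ?_
              rw [Finset.sum_comm]
              simp [theta_tmul]
          _ = _ := sum4_swap _
      -- right side
      have ER : (LinearMap.lTensor (NN.M ⊗[H] MM.M) (Coalgebra.comul (R := k) (A := H)))
            ((tau NN MM) (n ⊗ₜ[H] m))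
          = theta NN MM ((LinearMap.lTensor NN.M (Coalgebra.comul (R := k) (A := H))) (NN.ρ n))
              ((LinearMap.lTensor MM.M (Coalgebra.comul (R := k) (A := H))) (MM.ρ m)) := by
        have hYn : ∑ i ∈ s, ∑ l ∈ cn i, n₀ i ⊗ₜ[k] (cp i l ⊗ₜ[k] cq i l)
            = (LinearMap.lTensor NN.M (Coalgebra.comul (R := k) (A := H))) (NN.ρ n) := by
          rw [← hn, map_sum]
          exact Finset.sum_congr rfl fun i _ => by
            rw [LinearMap.lTensor_tmul, ← hcn i, TensorProduct.tmul_sum]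
        have hYm : ∑ j ∈ t, ∑ l ∈ cm j, m₀ j ⊗ₜ[k] (cu j l ⊗ₜ[k] cv j l)
            = (LinearMap.lTensor MM.M (Coalgebra.comul (R := k) (A := H))) (MM.ρ m) := by
          rw [← hm, map_sum]
          exact Finset.sum_congr rfl fun j _ => by
            rw [LinearMap.lTensor_tmul, ← hcm j, TensorProduct.tmul_sum]
        rw [tau_rep NN MM hn hm, ← hYn, ← hYm]
        rw [map_sum]
        simp only [map_sum, LinearMap.lTensor_tmul, LinearMap.sum_apply]
        calc ∑ i ∈ s, ∑ j ∈ t, (n₀ i ⊗ₜ[H] m₀ j) ⊗ₜ[k]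
              (Coalgebra.comul (R := k) (A := H) (m₁ j * n₁ i))
            = ∑ i ∈ s, ∑ j ∈ t, ∑ l' ∈ cm j, ∑ l ∈ cn i,
                (n₀ i ⊗ₜ[H] m₀ j) ⊗ₜ[k] ((cu j l' * cp i l) ⊗ₜ[k] (cv j l' * cq i l)) := by
              refine Finset.sum_congr rfl fun i _ => Finset.sum_congr rfl fun j _ => ?_
              rw [Bialgebra.comul_mul, ← hcn i, ← hcm j, Finset.sum_mul_sum]
              simp only [Algebra.TensorProduct.tmul_mul_tmul, TensorProduct.tmul_sum]
          _ = ∑ i ∈ s, ∑ l ∈ cn i, ∑ j ∈ t, ∑ l' ∈ cm j,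
                theta NN MM (n₀ i ⊗ₜ[k] (cp i l ⊗ₜ[k] cq i l))
                  (m₀ j ⊗ₜ[k] (cu j l' ⊗ₜ[k] cv j l')) := by
              refine Finset.sum_congr rfl fun i _ => ?_
              rw [Finset.sum_comm]
              refine Finset.sum_congr rfl fun j _ => ?_
              rw [Finset.sum_comm]
              simp [theta_tmul]
          _ = _ := sum4_swap _
      rw [EL, ER]

/-- The map `X ⊗ Y ↦ ∑ᵢ (bᵢ • X) ⊗ (cᵢ * Y * S⁻¹(aᵢ))`. -/
def lambdaMap (s : Finset ℕ) (a b c : ℕ → H) :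
    ((NN.M ⊗[H] MM.M) ⊗[k] H) →ₗ[k] ((NN.M ⊗[H] MM.M) ⊗[k] H) :=
  ∑ i ∈ s, TensorProduct.map (smulMap k H (b i))
    ((LinearMap.mulLeft k (c i)) ∘ₗ (LinearMap.mulRight k (Sinv (a i))))

lemma lambdaMap_tmul (s : Finset ℕ) (a b c : ℕ → H) (X : NN.M ⊗[H] MM.M) (Y : H) :
    lambdaMap NN MM s a b c (X ⊗ₜ[k] Y) =
      ∑ i ∈ s, (b i • X) ⊗ₜ[k] (c i * Y * Sinv (a i)) := by
  simp only [lambdaMap, LinearMap.sum_apply, TensorProduct.map_tmul, LinearMap.comp_apply,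
    LinearMap.mulRight_apply, LinearMap.mulLeft_apply]
  refine Finset.sum_congr rfl fun i _ => ?_
  rw [← mul_assoc]
  rfl

lemma tau_smul (h : H) (x : NN.M ⊗[H] MM.M) (s : Finset ℕ) (a b c : ℕ → H)
    (hD : (∑ i ∈ s, (a i ⊗ₜ[k] b i) ⊗ₜ[k] c i) = Delta2 k H h) :
    tau NN MM (h • x) = lambdaMap NN MM s a b c (tau NN MM x) := by
  induction x with
  | zero => rw [smul_zero, map_zero, map_zero]
  | add x y hx hy => rw [smul_add, map_add, map_add, map_add, hx, hy]
  | tmul n m =>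
    obtain ⟨tn, n₀, n₁, hn⟩ := exists_rep (NN.ρ n)
    obtain ⟨tm, m₀, m₁, hm⟩ := exists_rep (MM.ρ m)
    have hsm : h • (n ⊗ₜ[H] m) = (h • n) ⊗ₜ[H] m := TensorProduct.smul_tmul' h n m
    rw [hsm, tau_tmul, NN.compat h n s tn a b c n₀ n₁ hD hn, ← hm,
      tau_rep NN MM hn hm, map_sum]
    simp only [TensorProduct.sum_tmul, TensorProduct.tmul_sum, map_sum, tau2_tmul,
      lambdaMap_tmul]
    refine Eq.trans (Finset.sum_congr rfl fun l _ => Finset.sum_comm) ?_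
    refine Eq.trans Finset.sum_comm ?_
    refine Finset.sum_congr rfl fun j _ => Finset.sum_congr rfl fun l _ =>
      Finset.sum_congr rfl fun i _ => ?_
    rw [TensorProduct.smul_tmul']
    congr 1
    ring

lemma tau_compat : IsYDCompat k H Sinv (tau NN MM) := by
  intro h x s t a b c X Y hD hX
  rw [tau_smul NN MM h x s a b c hD, ← hX, map_sum]
  simp only [lambdaMap_tmul]
  exact Finset.sum_comm

/-- The tensor product of two Yetter-Drinfeld modules over `H`, with coaction
`ρ(n ⊗ m) = n₀ ⊗ m₀ ⊗ m₁ n₁`. -/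
def tensorYD : YDCat k H Sinv where
  M := NN.M ⊗[H] MM.M
  ρ := tau NN MM
  comod := tau_comod NN MM
  compat := tau_compat NN MM

lemma tensor_map_ext {W : Type} [AddCommGroup W] [Module k W]
    {F G : (NN.M ⊗[H] MM.M) →ₗ[k] W} (h : ∀ n m, F (n ⊗ₜ[H] m) = G (n ⊗ₜ[H] m)) : F = G := by
  apply LinearMap.ext
  intro x
  induction x with
  | zero => rw [map_zero, map_zero]
  | add x y hx hy => rw [map_add, map_add, hx, hy]
  | tmul n m => exact h n m

end TensorYD


/-- Lemma 2.1(2). Let `k` be a field and `H` a commutative Hopf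
algebra over `k` with bijective antipode, and let `N` be a Yetter-Drinfeld module
which is finitely generated projective as a left `H`-module. Then the functor
`P ↦ Hom_H(N, P)` preserves injective objects of the category of Yetter-Drinfeld
modules: if `P` is injective, then so is `Hom_H(N, P)` (with its canonical
Yetter-Drinfeld structure, characterized by the hypotheses below). -/
theorem homH_preserves_injectives
    (k H : Type) [Field k] [CommRing H] [HopfAlgebra k H]
    (Sinv : H →ₗ[k] H)
    (hS1 : ∀ h : H, Sinv (HopfAlgebra.antipode (R := k) (A := H) h) = h)
    (hS2 : ∀ h : H, HopfAlgebra.antipode (R := k) (A := H) (Sinv h) = h)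
    (N : YDCat k H Sinv)
    (hNfin : Module.Finite H N.M) (hNproj : Module.Projective H N.M)
    (P : YDCat k H Sinv) (hP : IsInjectiveYD k H Sinv P)
    (ρQ : (N.M →ₗ[H] P.M) →ₗ[k] (N.M →ₗ[H] P.M) ⊗[k] H)
    (hQc : IsComod k H ρQ) (hQyd : IsYDCompat k H Sinv ρQ)
    (hQchar : HomCoactChar Sinv N P ρQ) :
    IsInjectiveYD k H Sinv (YDCat.mk (M := N.M →ₗ[H] P.M) ρQ hQc hQyd) := by
  classical
  intro A B ι f hι hinj hf
  haveI := hNproj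
  -- the H-linear version of ι
  let ιH : A.M →ₗ[H] B.M :=
    { toFun := ι
      map_add' := ι.map_add
      map_smul' := fun h x => hι.1 h x }
  -- the induced map on tensor products
  let jH : (N.M ⊗[H] A.M) →ₗ[H] (N.M ⊗[H] B.M) := LinearMap.lTensor N.M ιH
  let j : (N.M ⊗[H] A.M) →ₗ[k] (N.M ⊗[H] B.M) := jH.restrictScalars k
  have hjinj : Function.Injective j :=
    Module.Flat.lTensor_preserves_injective_linearMap (M := N.M) ιH hinj
  -- j is a morphism of YD modules
  have hjhom : IsHom k H (tensorYD N A).ρ (tensorYD N B).ρ j := by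
    constructor
    · intro h x
      exact jH.map_smul h x
    · refine tensor_map_ext N A fun n a => ?_
      obtain ⟨tn, n₀, n₁, hn⟩ := exists_rep (N.ρ n)
      obtain ⟨ta, a₀, a₁, ha⟩ := exists_rep (A.ρ a)
      have hb : (∑ i ∈ ta, ι (a₀ i) ⊗ₜ[k] a₁ i) = B.ρ (ι a) := by
        have h2 : B.ρ (ι a) = (LinearMap.rTensor H ι) (A.ρ a) := by
          have := congrArg (fun (g : A.M →ₗ[k] B.M ⊗[k] H) => g a) hι.2
          simpa using this
        rw [h2, ← ha, map_sum]
        simp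
      have hja : j (n ⊗ₜ[H] a) = n ⊗ₜ[H] (ι a) := rfl
      show (tau N B) (j (n ⊗ₜ[H] a)) = (LinearMap.rTensor H j) ((tau N A) (n ⊗ₜ[H] a))
      rw [hja, tau_rep N B hn hb, tau_rep N A hn ha, map_sum]
      refine Finset.sum_congr rfl fun i _ => ?_
      rw [map_sum]
      rfl
  -- the map φ : N ⊗ A → P corresponding to f
  let bilφ : N.M →ₗ[H] A.M →ₗ[H] P.M :=
    LinearMap.mk₂ H (fun n a => f a n)
      (fun n n' a => map_add (f a) n n')
      (fun h n a => map_smul (f a) h n)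
      (fun n a a' => by dsimp only; rw [map_add]; rfl)
      (fun h n a => by dsimp only; rw [hf.1]; rfl)
  let φ : (N.M ⊗[H] A.M) →ₗ[k] P.M := (TensorProduct.lift bilφ).restrictScalars k
  have hφ_tmul : ∀ (n : N.M) (a : A.M), φ (n ⊗ₜ[H] a) = f a n := fun n a => rfl
  -- φ is a morphism of YD modules
  have hφhom : IsHom k H (tensorYD N A).ρ P.ρ φ := by
    constructor
    · intro h x
      exact (TensorProduct.lift bilφ).map_smul h x
    · refine tensor_map_ext N A fun n a => ?_
      obtain ⟨tn, n₀, n₁, hn⟩ := exists_rep (N.ρ n)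
      choose sn nu nv hn' using fun j => exists_rep (N.ρ (n₀ j))
      obtain ⟨ta, a₀, a₁, ha⟩ := exists_rep (A.ρ a)
      have hQa : ρQ (f a) = ∑ i ∈ ta, (f (a₀ i)) ⊗ₜ[k] a₁ i := by
        have h2 : ρQ (f a) = (LinearMap.rTensor H f) (A.ρ a) := by
          have := congrArg (fun (g : A.M →ₗ[k] _ ⊗[k] H) => g a) hf.2
          simpa using this
        rw [h2, ← ha, map_sum]
        simp
      have key : ∀ jj ∈ tn,
          (∑ i ∈ ta, ((f (a₀ i)) (n₀ jj)) ⊗ₜ[k] a₁ i)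
            = ∑ j' ∈ sn jj, (LinearMap.lTensor P.M
                (LinearMap.mulRight k (HopfAlgebra.antipode (R := k) (A := H) (nv jj j'))))
              (P.ρ ((f a) (nu jj j'))) := by
        intro jj _
        have hc := hQchar (f a) (n₀ jj) (sn jj) (nu jj) (nv jj) (hn' jj)
        rw [hQa, map_sum] at hc
        simpa [evalAtH] using hc
      have key2 : (∑ jj ∈ tn, ∑ i ∈ ta, ((f (a₀ i)) (n₀ jj)) ⊗ₜ[k] (a₁ i * n₁ jj))
          = ∑ jj ∈ tn, ∑ j' ∈ sn jj, (LinearMap.lTensor P.M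
              (LinearMap.mulRight k
                (HopfAlgebra.antipode (R := k) (A := H) (nv jj j') * n₁ jj)))
            (P.ρ ((f a) (nu jj j'))) := by
        refine Finset.sum_congr rfl fun jj hjj => ?_
        have := congrArg (LinearMap.lTensor P.M (LinearMap.mulRight k (n₁ jj))) (key jj hjj)
        rw [map_sum, map_sum] at this
        simp only [LinearMap.lTensor_tmul, LinearMap.mulRight_apply] at this
        rw [this]
        refine Finset.sum_congr rfl fun j' _ => ?_
        rw [← LinearMap.comp_apply, ← LinearMap.lTensor_comp]
        congr 2
        apply LinearMap.ext
        intro z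
        simp [mul_assoc]
      let Ω : N.M →ₗ[k] H →ₗ[k] (P.M ⊗[k] H) :=
        LinearMap.mk₂ k
          (fun n' y => (LinearMap.lTensor P.M (LinearMap.mulRight k y)) (P.ρ ((f a) n')))
          (fun n' n'' y => by dsimp only; rw [map_add, map_add, map_add])
          (fun c n' y => by dsimp only; rw [LinearMap.map_smul_of_tower, map_smul, map_smul])
          (fun n' y y' => by
            dsimp only
            rw [show LinearMap.mulRight k (y + y')
                = LinearMap.mulRight k y + LinearMap.mulRight k y' from
              LinearMap.ext fun z => by simp [mul_add], LinearMap.lTensor_add,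
              LinearMap.add_apply])
          (fun c n' y => by
            dsimp only
            rw [show LinearMap.mulRight k (c • y) = c • LinearMap.mulRight k y from
              LinearMap.ext fun z => by simp [mul_smul_comm], LinearMap.lTensor_smul,
              LinearMap.smul_apply])
      have hΩ := congrArg (TensorProduct.lift Ω)
        (collapse_Sr N.comod hn (fun jj _ => hn' jj))
      rw [map_sum] at hΩ
      simp only [map_sum, TensorProduct.lift.tmul] at hΩ
      have hΩ1 : (TensorProduct.lift Ω) (n ⊗ₜ[k] (1 : H)) = P.ρ ((f a) n) := by
        rw [TensorProduct.lift.tmul]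
        show (LinearMap.lTensor P.M (LinearMap.mulRight k (1 : H))) (P.ρ ((f a) n)) = _
        rw [show LinearMap.mulRight k (1 : H) = LinearMap.id from
          LinearMap.ext fun z => by simp, LinearMap.lTensor_id]
        rfl
      -- assemble
      show P.ρ (φ (n ⊗ₜ[H] a)) = (LinearMap.rTensor H φ) ((tau N A) (n ⊗ₜ[H] a))
      rw [hφ_tmul, tau_rep N A hn ha, map_sum]
      calc P.ρ (f a n)
          = (TensorProduct.lift Ω) (n ⊗ₜ[k] (1 : H)) := hΩ1.symm
        _ = ∑ jj ∈ tn, ∑ j' ∈ sn jj, Ω (nu jj j')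
              (HopfAlgebra.antipode (R := k) (A := H) (nv jj j') * n₁ jj) := by
            rw [TensorProduct.lift.tmul]
            exact hΩ.symm
        _ = ∑ jj ∈ tn, ∑ i ∈ ta, ((f (a₀ i)) (n₀ jj)) ⊗ₜ[k] (a₁ i * n₁ jj) := key2.symm
        _ = _ := by
            refine Finset.sum_congr rfl fun jj _ => ?_
            rw [map_sum]
            refine Finset.sum_congr rfl fun i _ => ?_
            rw [LinearMap.rTensor_tmul, hφ_tmul]
  -- extend along j using injectivity of P
  obtain ⟨ψ, hψ, hcomp⟩ := hP (tensorYD N A) (tensorYD N B) j φ hjhom hjinj hφhom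
  -- the extension g : B → Hom_H(N, P)
  let g : B.M →ₗ[k] (N.M →ₗ[H] P.M) :=
    { toFun := fun bb =>
        { toFun := fun n => ψ (n ⊗ₜ[H] bb)
          map_add' := fun n n' => by rw [TensorProduct.add_tmul]; exact map_add ψ _ _
          map_smul' := fun h n => by
            rw [RingHom.id_apply, ← TensorProduct.smul_tmul']; exact hψ.1 h (n ⊗ₜ[H] bb) }
      map_add' := fun bb bb' => by
        apply LinearMap.ext
        intro n
        show ψ (n ⊗ₜ[H] (bb + bb')) = ψ (n ⊗ₜ[H] bb) + ψ (n ⊗ₜ[H] bb')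
        rw [TensorProduct.tmul_add]; exact map_add ψ _ _
      map_smul' := fun c bb => by
        apply LinearMap.ext
        intro n
        show ψ (n ⊗ₜ[H] (c • bb)) = c • ψ (n ⊗ₜ[H] bb)
        rw [TensorProduct.tmul_smul]; exact map_smul ψ c _ }
  have hg_apply : ∀ (bb : B.M) (n : N.M), (g bb) n = ψ (n ⊗ₜ[H] bb) := fun _ _ => rfl
  refine ⟨g, ⟨?_, ?_⟩, ?_⟩
  · -- H-linearity of g
    intro h bb
    apply LinearMap.ext
    intro n
    show ψ (n ⊗ₜ[H] (h • bb)) = (h • g bb) n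
    rw [TensorProduct.tmul_smul]; refine (hψ.1 h (n ⊗ₜ[H] bb)).trans ?_
    rfl
  · -- colinearity of g
    apply LinearMap.ext
    intro bb
    simp only [LinearMap.comp_apply]
    obtain ⟨tb, b₀, b₁, hb⟩ := exists_rep (B.ρ bb)
    rw [← sub_eq_zero]
    refine tensor_eq_zero_of_forall (fun n : N.M => evalAtH (N := P.M) n)
      (fun q hq => LinearMap.ext fun n => hq n) _ (fun n => ?_)
    rw [map_sub, sub_eq_zero]
    obtain ⟨tn, n₀, n₁, hn⟩ := exists_rep (N.ρ n)
    choose sn nu nv hn' using fun jj => exists_rep (N.ρ (n₀ jj))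
    let Ξ : N.M →ₗ[k] H →ₗ[k] (P.M ⊗[k] H) :=
      LinearMap.mk₂ k
        (fun n' y => ∑ i ∈ tb, (ψ (n' ⊗ₜ[H] b₀ i)) ⊗ₜ[k] (b₁ i * y))
        (fun n' n'' y => by
          rw [← Finset.sum_add_distrib]
          refine Finset.sum_congr rfl fun i _ => ?_
          rw [TensorProduct.add_tmul, show ψ (n' ⊗ₜ[H] b₀ i + n'' ⊗ₜ[H] b₀ i) = ψ (n' ⊗ₜ[H] b₀ i) + ψ (n'' ⊗ₜ[H] b₀ i) from map_add ψ _ _, TensorProduct.add_tmul])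
        (fun c n' y => by
          rw [Finset.smul_sum]
          refine Finset.sum_congr rfl fun i _ => ?_
          rw [← TensorProduct.smul_tmul', show ψ (c • n' ⊗ₜ[H] b₀ i) = c • ψ (n' ⊗ₜ[H] b₀ i) from map_smul ψ c _, TensorProduct.smul_tmul'])
        (fun n' y y' => by
          rw [← Finset.sum_add_distrib]
          refine Finset.sum_congr rfl fun i _ => ?_
          rw [mul_add, TensorProduct.tmul_add])
        (fun c n' y => by
          rw [Finset.smul_sum]
          refine Finset.sum_congr rfl fun i _ => ?_
          rw [mul_smul_comm, TensorProduct.tmul_smul])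
    have hΞ := congrArg (TensorProduct.lift Ξ)
      (collapse_lS N.comod hn (fun jj _ => hn' jj))
    rw [map_sum] at hΞ
    simp only [map_sum, TensorProduct.lift.tmul] at hΞ
    have hΞ1 : (TensorProduct.lift Ξ) (n ⊗ₜ[k] (1 : H))
        = ∑ i ∈ tb, (ψ (n ⊗ₜ[H] b₀ i)) ⊗ₜ[k] b₁ i := by
      rw [TensorProduct.lift.tmul]
      show (∑ i ∈ tb, (ψ (n ⊗ₜ[H] b₀ i)) ⊗ₜ[k] (b₁ i * 1)) = _
      refine Finset.sum_congr rfl fun i _ => ?_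
      rw [mul_one]
    calc (LinearMap.rTensor H (evalAtH (N := P.M) n)) (ρQ (g bb))
        = ∑ jj ∈ tn, (LinearMap.lTensor P.M
            (LinearMap.mulRight k (HopfAlgebra.antipode (R := k) (A := H) (n₁ jj))))
          (P.ρ ((g bb) (n₀ jj))) := hQchar (g bb) n tn n₀ n₁ hn
      _ = ∑ jj ∈ tn, ∑ j' ∈ sn jj, Ξ (nu jj j')
            (nv jj j' * HopfAlgebra.antipode (R := k) (A := H) (n₁ jj)) := by
          refine Finset.sum_congr rfl fun jj _ => ?_
          rw [hg_apply]
          have hcol : P.ρ (ψ (n₀ jj ⊗ₜ[H] bb))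
              = (LinearMap.rTensor H ψ) ((tau N B) (n₀ jj ⊗ₜ[H] bb)) := by
            have := congrArg (fun (g' : (N.M ⊗[H] B.M) →ₗ[k] P.M ⊗[k] H) =>
              g' (n₀ jj ⊗ₜ[H] bb)) hψ.2
            exact this
          rw [hcol, tau_rep N B (hn' jj) hb]
          rw [show LinearMap.rTensor H ψ (∑ j' ∈ sn jj, ∑ i ∈ tb,
                (nu jj j' ⊗ₜ[H] b₀ i) ⊗ₜ[k] (b₁ i * nv jj j') : (N.M ⊗[H] B.M) ⊗[k] H)
              = ∑ j' ∈ sn jj, ∑ i ∈ tb, ψ (nu jj j' ⊗ₜ[H] b₀ i) ⊗ₜ[k] (b₁ i * nv jj j') from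
            (map_sum _ _ _).trans (Finset.sum_congr rfl fun j' _ =>
              (map_sum _ _ _).trans (Finset.sum_congr rfl fun i _ => rfl))]
          simp only [map_sum]
          refine Finset.sum_congr rfl fun j' _ => ?_
          show _ = ∑ i ∈ tb, (ψ (nu jj j' ⊗ₜ[H] b₀ i)) ⊗ₜ[k]
              (b₁ i * (nv jj j' * HopfAlgebra.antipode (R := k) (A := H) (n₁ jj)))
          refine Finset.sum_congr rfl fun i _ => ?_
          rw [LinearMap.lTensor_tmul, LinearMap.mulRight_apply,
            mul_assoc]
      _ = (TensorProduct.lift Ξ) (n ⊗ₜ[k] (1 : H)) := by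
          rw [TensorProduct.lift.tmul]
          exact hΞ
      _ = ∑ i ∈ tb, (ψ (n ⊗ₜ[H] b₀ i)) ⊗ₜ[k] b₁ i := hΞ1
      _ = (LinearMap.rTensor H (evalAtH (N := P.M) n))
            ((LinearMap.rTensor H g) (B.ρ bb)) := by
          rw [← hb, map_sum, map_sum]
          refine Finset.sum_congr rfl fun i _ => ?_
          rw [LinearMap.rTensor_tmul, LinearMap.rTensor_tmul]
          rfl
  · -- g ∘ ι = f
    apply LinearMap.ext
    intro a
    apply LinearMap.ext
    intro n
    show ψ (n ⊗ₜ[H] (ι a)) = (f a) n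
    have : n ⊗ₜ[H] (ι a) = j (n ⊗ₜ[H] a) := rfl
    rw [this, ← hφ_tmul n a]
    exact congrArg (fun (u : (N.M ⊗[H] A.M) →ₗ[k] P.M) => u (n ⊗ₜ[H] a)) hcomp

end YDPaper
end
end

section
/- Let k be a field, H a commutative Hopf algebra over k with bijective antipode, N a left-right Yetter-Drinfeld module over H, and V a right H-comodule that is finite dimensional over k. Then the map φ : Hom_H(H ⊗ V, N) → Hom_k(V, N), φ(f)(v) = f(1 ⊗ v), is an isomorphism of right H-comodules, where H ⊗ V has the Yetter-Drinfeld structure h(h' ⊗ v) = hh' ⊗ v, rho(h ⊗ v) = h_2 ⊗ v_0 ⊗ h_3 v_1 S^{-1}(h_1), the H-comodule structure on Hom_H(H ⊗ V, N) is determined by f_0(x) ⊗ f_1 = f(x_0)_0 ⊗ f(x_0)_1 S(x_1), and the H-comodule structure on Hom_k(V, N) is determined by g_0(v) ⊗ g_1 = g(v_0)_0 ⊗ g(v_0)_1 S(v_1). -/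
/-!
Common definitions for formalizing "Semisimplicity of the categories of
Yetter-Drinfeld modules and Long dimodules" (Caenepeel, Guédénon).
-/

open TensorProduct

noncomputable section
namespace YDPaper

section AuxForStatement15

/-- Any element of a tensor product is a finite (range-indexed) sum of pure tensors. -/
lemma exists_range_repr {k : Type} [CommRing k] {M P : Type} [AddCommGroup M] [Module k M]
    [AddCommGroup P] [Module k P] (x : M ⊗[k] P) :
    ∃ (n : ℕ) (m : ℕ → M) (p : ℕ → P),
      (∑ j ∈ Finset.range n, m j ⊗ₜ[k] p j) = x := by
  induction x with
  | zero => exact ⟨0, 0, 0, by simp⟩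
  | tmul a b => exact ⟨1, fun _ => a, fun _ => b, by simp⟩
  | add x y hx hy =>
    obtain ⟨n, m, p, hm⟩ := hx
    obtain ⟨n', m', p', hm'⟩ := hy
    refine ⟨n + n', fun j => if j < n then m j else m' (j - n),
      fun j => if j < n then p j else p' (j - n), ?_⟩
    rw [Finset.sum_range_add, ← hm, ← hm']
    congr 1
    · refine Finset.sum_congr rfl fun j hj => ?_
      rw [Finset.mem_range] at hj
      simp [hj]
    · refine Finset.sum_congr rfl fun j hj => ?_
      simp

/-- Over a field, the evaluation maps jointly detect elements of
`Hom_k(V, N) ⊗ H`. -/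
lemma rTensor_evalAtK_inj {k : Type} [Field k] {V N' H : Type}
    [AddCommGroup V] [Module k V] [AddCommGroup N'] [Module k N']
    [AddCommGroup H] [Module k H]
    {ζ η : (V →ₗ[k] N') ⊗[k] H}
    (hz : ∀ v : V, LinearMap.rTensor H (evalAtK (k := k) (N := N') v) ζ
        = LinearMap.rTensor H (evalAtK (k := k) (N := N') v) η) : ζ = η := by
  classical
  let b := Module.Basis.ofVectorSpace k H
  let e : (V →ₗ[k] N') ⊗[k] H ≃ₗ[k] (Module.Basis.ofVectorSpaceIndex k H →₀ (V →ₗ[k] N')) :=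
    (LinearEquiv.lTensor (V →ₗ[k] N') b.repr).trans
      (TensorProduct.finsuppScalarRight k k (V →ₗ[k] N') _)
  let e' : N' ⊗[k] H ≃ₗ[k] (Module.Basis.ofVectorSpaceIndex k H →₀ N') :=
    (LinearEquiv.lTensor N' b.repr).trans
      (TensorProduct.finsuppScalarRight k k N' _)
  have key : ∀ (v : V) (ξ : (V →ₗ[k] N') ⊗[k] H) (i),
      ((e ξ) i) v = (e' (LinearMap.rTensor H (evalAtK (k := k) (N := N') v) ξ)) i := by
    intro v ξ i
    induction ξ with
    | zero => simp
    | tmul g h =>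
      simp [e, e', LinearEquiv.lTensor_tmul,
        TensorProduct.finsuppScalarRight_apply_tmul_apply, evalAtK]
    | add x y hx hy =>
      simp only [map_add, Finsupp.add_apply, LinearMap.add_apply, hx, hy]
  apply e.injective
  refine Finsupp.ext fun i => LinearMap.ext fun v => ?_
  rw [key, key, hz v]

end AuxForStatement15

/-- Lemma 1.5(1). Let `k` be a field, `H` a commutative Hopf
algebra over `k` with bijective antipode, `N` a Yetter-Drinfeld module, and `V` a
finite dimensional right `H`-comodule. Then the map
`φ : Hom_H(H ⊗ V, N) → Hom_k(V, N)`, `φ(f)(v) = f(1 ⊗ v)`, is an isomorphism of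
right `H`-comodules, where `H ⊗ V` carries its canonical Yetter-Drinfeld structure
and both Hom-spaces carry the comodule structures determined by
`g₀(x) ⊗ g₁ = g(x₀)₀ ⊗ g(x₀)₁ S(x₁)`. -/
theorem homH_from_H_tensor_comodule_iso
    (k H : Type) [Field k] [CommRing H] [HopfAlgebra k H]
    (Sinv : H →ₗ[k] H)
    (hS1 : ∀ h : H, Sinv (HopfAlgebra.antipode (R := k) (A := H) h) = h)
    (hS2 : ∀ h : H, HopfAlgebra.antipode (R := k) (A := H) (Sinv h) = h)
    (N : YDCat k H Sinv)
    (V : ComodCat k H) (hV : FiniteDimensional k V.V)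
    -- the Yetter-Drinfeld module `H ⊗ V`
    (ρT : (H ⊗[k] V.V) →ₗ[k] (H ⊗[k] V.V) ⊗[k] H)
    (hTc : IsComod k H ρT) (hTyd : IsYDCompat k H Sinv ρT)
    (hTchar : HTensorYDChar Sinv V ρT)
    -- the comodule structure on `Hom_H(H ⊗ V, N)`
    (ρHom : ((H ⊗[k] V.V) →ₗ[H] N.M) →ₗ[k] ((H ⊗[k] V.V) →ₗ[H] N.M) ⊗[k] H)
    (hHomc : IsComod k H ρHom)
    (hHomchar : HomCoactChar Sinv (YDCat.mk (M := H ⊗[k] V.V) ρT hTc hTyd) N ρHom)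
    -- the comodule structure on `Hom_k(V, N)`
    (ρ' : (V.V →ₗ[k] N.M) →ₗ[k] (V.V →ₗ[k] N.M) ⊗[k] H)
    (h'c : IsComod k H ρ')
    (h'char : HomKCoactChar Sinv V N ρ') :
    Function.Bijective (resUnitMap (k := k) (H := H) V.V N.M) ∧
    IsColin k H ρHom ρ' (resUnitMap (k := k) (H := H) V.V N.M) := by
  classical
  have hanti1 : HopfAlgebra.antipode (R := k) (A := H) 1 = 1 := by
    have h := HopfAlgebra.mul_antipode_rTensor_comul_apply (R := k) (A := H) (a := 1)
    simpa [Bialgebra.comul_one, Algebra.TensorProduct.one_def] using h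
  have hSinv1 : Sinv 1 = 1 := by
    have h := hS1 1
    rwa [hanti1] at h
  have hres : ∀ (f : (H ⊗[k] V.V) →ₗ[H] N.M) (v : V.V),
      resUnitMap (k := k) (H := H) V.V N.M f v = f ((1 : H) ⊗ₜ[k] v) := fun _ _ => rfl
  constructor
  · rw [Function.bijective_iff_has_inverse]
    refine ⟨fun g => LinearMap.liftBaseChange H g, ?_, ?_⟩
    · intro f
      have h1 : resUnitMap (k := k) (H := H) V.V N.M f
          = (LinearMap.liftBaseChangeEquiv (R := k) (M := V.V) (N := N.M) H).symm f :=
        LinearMap.ext fun v => rfl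
      show LinearMap.liftBaseChange H (resUnitMap (k := k) (H := H) V.V N.M f) = f
      rw [h1]
      exact (LinearMap.liftBaseChangeEquiv (R := k) (M := V.V) (N := N.M) H).apply_symm_apply f
    · intro g
      refine LinearMap.ext fun v => ?_
      rw [hres]
      simp [LinearMap.liftBaseChange_tmul]
  · refine LinearMap.ext fun f => ?_
    simp only [LinearMap.comp_apply]
    refine rTensor_evalAtK_inj (k := k) fun v => ?_
    obtain ⟨n, v₀, v₁, hrepr⟩ := exists_range_repr (V.ρ v)
    -- left side via h'char
    have hL := h'char (resUnitMap (k := k) (H := H) V.V N.M f) v (Finset.range n) v₀ v₁ hrepr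
    -- decomposition of ρT (1 ⊗ v)
    have hdelta : (∑ i ∈ ({0} : Finset ℕ),
        (((1 : H) ⊗ₜ[k] (1 : H)) ⊗ₜ[k] (1 : H))) = Delta2 k H 1 := by
      simp [Delta2, Bialgebra.comul_one, Algebra.TensorProduct.one_def]
    have hT0 := hTchar 1 v ({0} : Finset ℕ) (Finset.range n)
      (fun _ => (1 : H)) (fun _ => (1 : H)) (fun _ => (1 : H)) v₀ v₁ hdelta hrepr
    have hT : (∑ j ∈ Finset.range n, ((1 : H) ⊗ₜ[k] v₀ j) ⊗ₜ[k] v₁ j)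
        = ρT ((1 : H) ⊗ₜ[k] v) := by
      rw [hT0, Finset.sum_singleton]
      refine Finset.sum_congr rfl fun j _ => ?_
      rw [hSinv1, one_mul, mul_one]
    have hR := hHomchar f ((1 : H) ⊗ₜ[k] v) (Finset.range n)
      (fun j => (1 : H) ⊗ₜ[k] v₀ j) v₁ hT
    have hcomp : (evalAtK (k := k) (N := N.M) v).comp
        (resUnitMap (k := k) (H := H) V.V N.M) = evalAtH (k := k) ((1 : H) ⊗ₜ[k] v) :=
      LinearMap.ext fun f => rfl
    calc LinearMap.rTensor H (evalAtK (k := k) (N := N.M) v)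
          (ρ' (resUnitMap (k := k) (H := H) V.V N.M f))
        = ∑ j ∈ Finset.range n, (LinearMap.lTensor N.M
            (LinearMap.mulRight k (HopfAlgebra.antipode (R := k) (A := H) (v₁ j))))
            (N.ρ (f ((1 : H) ⊗ₜ[k] v₀ j))) := hL
      _ = LinearMap.rTensor H (evalAtH (k := k) ((1 : H) ⊗ₜ[k] v)) (ρHom f) := hR.symm
      _ = LinearMap.rTensor H (evalAtK (k := k) (N := N.M) v)
            (LinearMap.rTensor H (resUnitMap (k := k) (H := H) V.V N.M) (ρHom f)) := by
          rw [← hcomp, LinearMap.rTensor_comp, LinearMap.comp_apply]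

end YDPaper
end
end

section
/- Let k be a field, H a commutative Hopf algebra over k with bijective antipode, and V a finite dimensional right H-comodule that is projective as an object of the category of right H-comodules. Then H ⊗ V, with Yetter-Drinfeld structure h(h' ⊗ v) = hh' ⊗ v and rho(h ⊗ v) = h_2 ⊗ v_0 ⊗ h_3 v_1 S^{-1}(h_1), is a projective object of the category of left-right Yetter-Drinfeld modules over H. -/
/-!
Common definitions for formalizing "Semisimplicity of the categories of
Yetter-Drinfeld modules and Long dimodules" (Caenepeel, Guédénon).
-/

open TensorProduct

noncomputable section
namespace YDPaper

section Helpers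

variable {k : Type} [CommRing k] {M N P : Type}
  [AddCommGroup M] [Module k M] [AddCommGroup N] [Module k N]
  [AddCommGroup P] [Module k P]

lemma combine_sums {α : Type} [AddCommMonoid α] (t₁ t₂ : Finset ℕ) (f f₁ f₂ : ℕ → α)
    (hf : ∀ j, f j = if j % 2 = 0 then f₁ (j / 2) else f₂ (j / 2)) :
    ∑ j ∈ (t₁.image (fun i => 2 * i) ∪ t₂.image (fun i => 2 * i + 1)), f j
      = ∑ j ∈ t₁, f₁ j + ∑ j ∈ t₂, f₂ j := by
  rw [Finset.sum_union]
  · congr 1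
    · rw [Finset.sum_image (fun x _ y _ h => by omega)]
      refine Finset.sum_congr rfl fun i _ => ?_
      have h1 : (2 * i) % 2 = 0 := by omega
      have h2 : (2 * i) / 2 = i := by omega
      rw [hf, if_pos h1, h2]
    · rw [Finset.sum_image (fun x _ y _ h => by omega)]
      refine Finset.sum_congr rfl fun i _ => ?_
      have h1 : ¬ ((2 * i + 1) % 2 = 0) := by omega
      have h2 : (2 * i + 1) / 2 = i := by omega
      rw [hf, if_neg h1, h2]
  · rw [Finset.disjoint_left]
    intro x hx hy
    simp only [Finset.mem_image] at hx hy
    obtain ⟨i, _, hi⟩ := hx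
    obtain ⟨j, _, hj⟩ := hy
    omega

lemma exists_repr (x : M ⊗[k] N) :
    ∃ (t : Finset ℕ) (m : ℕ → M) (n : ℕ → N), (∑ j ∈ t, m j ⊗ₜ[k] n j) = x := by
  induction x using TensorProduct.induction_on with
  | zero => exact ⟨∅, 0, 0, by simp⟩
  | tmul m n => exact ⟨{0}, fun _ => m, fun _ => n, by simp⟩
  | add x y hx hy =>
    obtain ⟨t₁, m₁, n₁, h₁⟩ := hx
    obtain ⟨t₂, m₂, n₂, h₂⟩ := hy
    refine ⟨t₁.image (fun i => 2 * i) ∪ t₂.image (fun i => 2 * i + 1),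
      fun j => if j % 2 = 0 then m₁ (j / 2) else m₂ (j / 2),
      fun j => if j % 2 = 0 then n₁ (j / 2) else n₂ (j / 2), ?_⟩
    rw [combine_sums t₁ t₂ _ (fun j => m₁ j ⊗ₜ[k] n₁ j) (fun j => m₂ j ⊗ₜ[k] n₂ j)
      (fun j => by by_cases h : j % 2 = 0 <;> simp [h]), h₁, h₂]

lemma exists_repr3 (x : (M ⊗[k] N) ⊗[k] P) :
    ∃ (s : Finset ℕ) (a : ℕ → M) (b : ℕ → N) (c : ℕ → P),
      (∑ i ∈ s, (a i ⊗ₜ[k] b i) ⊗ₜ[k] c i) = x := by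
  induction x using TensorProduct.induction_on with
  | zero => exact ⟨∅, 0, 0, 0, by simp⟩
  | tmul y p =>
    obtain ⟨t, m, n, h⟩ := exists_repr y
    exact ⟨t, m, n, fun _ => p, by rw [← h, TensorProduct.sum_tmul]⟩
  | add x y hx hy =>
    obtain ⟨t₁, a₁, b₁, c₁, h₁⟩ := hx
    obtain ⟨t₂, a₂, b₂, c₂, h₂⟩ := hy
    refine ⟨t₁.image (fun i => 2 * i) ∪ t₂.image (fun i => 2 * i + 1),
      fun j => if j % 2 = 0 then a₁ (j / 2) else a₂ (j / 2),
      fun j => if j % 2 = 0 then b₁ (j / 2) else b₂ (j / 2),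
      fun j => if j % 2 = 0 then c₁ (j / 2) else c₂ (j / 2), ?_⟩
    rw [combine_sums t₁ t₂ _ (fun j => (a₁ j ⊗ₜ[k] b₁ j) ⊗ₜ[k] c₁ j)
      (fun j => (a₂ j ⊗ₜ[k] b₂ j) ⊗ₜ[k] c₂ j)
      (fun j => by by_cases h : j % 2 = 0 <;> simp [h]), h₁, h₂]

end Helpers

section AntipodeOne

variable {k H : Type} [CommRing k] [Ring H] [HopfAlgebra k H]

lemma antipode_one' : HopfAlgebra.antipode (R := k) (A := H) 1 = 1 := by
  have := HopfAlgebra.mul_antipode_rTensor_comul_apply (R := k) (A := H) 1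
  simpa [Algebra.TensorProduct.one_def, LinearMap.mul'_apply] using this

lemma delta2_one : Delta2 k H 1 = ((1 : H) ⊗ₜ[k] (1 : H)) ⊗ₜ[k] (1 : H) := by
  simp only [Delta2, LinearMap.comp_apply, Bialgebra.comul_one,
    Algebra.TensorProduct.one_def, LinearMap.rTensor_tmul, Bialgebra.comul_one]

end AntipodeOne

/-- Lemma 1.5(2). Let `k` be a field, `H` a commutative Hopf
algebra over `k` with bijective antipode, and `V` a finite dimensional right
`H`-comodule which is projective as an object of the category of right
`H`-comodules. Then `H ⊗ V`, with its canonical Yetter-Drinfeld structure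
`h(h' ⊗ v) = hh' ⊗ v`, `ρ(h ⊗ v) = h₂ ⊗ v₀ ⊗ h₃ v₁ S⁻¹(h₁)`, is a projective
object of the category of Yetter-Drinfeld modules. -/
theorem H_tensor_projective_comodule_is_projective_YD
    (k H : Type) [Field k] [CommRing H] [HopfAlgebra k H]
    (Sinv : H →ₗ[k] H)
    (hS1 : ∀ h : H, Sinv (HopfAlgebra.antipode (R := k) (A := H) h) = h)
    (hS2 : ∀ h : H, HopfAlgebra.antipode (R := k) (A := H) (Sinv h) = h)
    (V : ComodCat k H) (hV : FiniteDimensional k V.V)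
    (hVproj : IsProjectiveComod k H V)
    (ρT : (H ⊗[k] V.V) →ₗ[k] (H ⊗[k] V.V) ⊗[k] H)
    (hTc : IsComod k H ρT) (hTyd : IsYDCompat k H Sinv ρT)
    (hTchar : HTensorYDChar Sinv V ρT) :
    IsProjectiveYD k H Sinv (YDCat.mk (M := H ⊗[k] V.V) ρT hTc hTyd) := by
  intro A B g f hg hgsurj hf
  -- the restriction of f along v ↦ 1 ⊗ v
  set φf : V.V →ₗ[k] B.M := f.comp ((TensorProduct.mk k H V.V) 1) with hφf
  have hSinv1 : Sinv 1 = 1 := by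
    have := hS1 (1 : H)
    rwa [antipode_one'] at this
  -- ρT at 1 ⊗ v
  have hρT1 : ∀ (v : V.V) (t : Finset ℕ) (v₀ : ℕ → V.V) (v₁ : ℕ → H),
      (∑ j ∈ t, v₀ j ⊗ₜ[k] v₁ j) = V.ρ v →
      ρT ((1 : H) ⊗ₜ[k] v) = ∑ j ∈ t, ((1 : H) ⊗ₜ[k] v₀ j) ⊗ₜ[k] v₁ j := by
    intro v t v₀ v₁ ht
    have hs : (∑ i ∈ ({0} : Finset ℕ),
        (((1 : H)) ⊗ₜ[k] ((1 : H))) ⊗ₜ[k] ((1 : H))) = Delta2 k H 1 := by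
      rw [delta2_one]; simp
    have := hTchar 1 v {0} t (fun _ => 1) (fun _ => 1) (fun _ => 1) v₀ v₁ hs ht
    simpa [hSinv1] using this
  -- φf is colinear
  have hφcolin : IsColin k H V.ρ B.ρ φf := by
    apply LinearMap.ext
    intro v
    obtain ⟨t, v₀, v₁, ht⟩ := exists_repr (V.ρ v)
    have hfc : B.ρ (f ((1 : H) ⊗ₜ[k] v)) =
        (LinearMap.rTensor H f) (ρT ((1 : H) ⊗ₜ[k] v)) := by
      have := congrArg (fun (q : (H ⊗[k] V.V) →ₗ[k] B.M ⊗[k] H) =>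
        q ((1 : H) ⊗ₜ[k] v)) hf.2
      simpa using this
    simp only [LinearMap.comp_apply]
    rw [show φf v = f ((1 : H) ⊗ₜ[k] v) from rfl, hfc, hρT1 v t v₀ v₁ ht, ← ht]
    simp only [map_sum, LinearMap.rTensor_tmul]
    rfl
  -- use projectivity of V to lift φf through g
  obtain ⟨ψ, hψcolin, hψcomp⟩ := hVproj ⟨A.M, A.ρ, A.comod⟩ ⟨B.M, B.ρ, B.comod⟩
    g φf hg.2 hgsurj hφcolin
  have hgψ : ∀ v : V.V, g (ψ v) = f ((1 : H) ⊗ₜ[k] v) := by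
    intro v
    have := congrArg (fun (q : V.V →ₗ[k] B.M) => q v) hψcomp
    exact (by simpa using this : g (ψ v) = φf v)
  -- the bilinear map (h, v) ↦ h • ψ v
  set β : H →ₗ[k] V.V →ₗ[k] A.M :=
    { toFun := fun h => (smulMap k H (M := A.M) h).comp ψ
      map_add' := fun h h' => by
        ext v; simp [smulMap, add_smul]
      map_smul' := fun c h => by
        ext v; simp [smulMap, smul_assoc] } with hβ
  set l : (H ⊗[k] V.V) →ₗ[k] A.M := TensorProduct.lift β with hl
  have hl_apply : ∀ (h : H) (v : V.V), l (h ⊗ₜ[k] v) = h • ψ v := fun _ _ => rfl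
  -- l is H-linear
  have hlH : ∀ (h' : H) (x : H ⊗[k] V.V), l (h' • x) = h' • l x := by
    intro h' x
    induction x using TensorProduct.induction_on with
    | zero => simp
    | tmul h v =>
      rw [TensorProduct.smul_tmul', hl_apply, hl_apply, smul_eq_mul, mul_smul]
    | add x y hx hy => rw [smul_add, map_add, hx, hy, map_add, smul_add]
  -- l is colinear
  have hlcolin : A.ρ.comp l = (LinearMap.rTensor H l).comp ρT := by
    apply TensorProduct.ext'
    intro h v
    obtain ⟨s, a, b, c, hs⟩ := exists_repr3 (Delta2 k H h)
    obtain ⟨t, v₀, v₁, ht⟩ := exists_repr (V.ρ v)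
    have hρψ : (∑ j ∈ t, ψ (v₀ j) ⊗ₜ[k] v₁ j) = A.ρ (ψ v) := by
      have hcol := congrArg (fun (q : V.V →ₗ[k] A.M ⊗[k] H) => q v) hψcolin
      simp only [LinearMap.comp_apply] at hcol
      rw [hcol, ← ht]
      simp only [map_sum, LinearMap.rTensor_tmul]
    have hLHS : A.ρ (l (h ⊗ₜ[k] v)) =
        ∑ i ∈ s, ∑ j ∈ t, (b i • ψ (v₀ j)) ⊗ₜ[k] (c i * v₁ j * Sinv (a i)) := by
      rw [hl_apply]
      exact A.compat h (ψ v) s t a b c (fun j => ψ (v₀ j)) v₁ hs hρψ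
    have hRHS : (LinearMap.rTensor H l) (ρT (h ⊗ₜ[k] v)) =
        ∑ i ∈ s, ∑ j ∈ t, (b i • ψ (v₀ j)) ⊗ₜ[k] (c i * v₁ j * Sinv (a i)) := by
      rw [hTchar h v s t a b c v₀ v₁ hs ht]
      simp only [map_sum, LinearMap.rTensor_tmul, hl_apply]
    simp only [LinearMap.comp_apply]
    rw [hLHS, hRHS]
  -- g ∘ l = f
  have hgl : g.comp l = f := by
    apply TensorProduct.ext'
    intro h v
    have h1 : h ⊗ₜ[k] v = h • ((1 : H) ⊗ₜ[k] v) := by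
      rw [TensorProduct.smul_tmul', smul_eq_mul, mul_one]
    simp only [LinearMap.comp_apply]
    rw [hl_apply, hg.1, hgψ, h1, hf.1]
  exact ⟨l, ⟨hlH, hlcolin⟩, hgl⟩
end YDPaper
end
end

section
/- Let H be a commutative Hopf algebra with bijective antipode over a commutative ring k (faithfully flat over k), and let M, N be left-right Yetter-Drinfeld modules over H. Then M ⊗_H N is a left-right Yetter-Drinfeld module with H-action h(m ⊗ n) = hm ⊗ n = m ⊗ hn and right H-coaction rho(m ⊗ n) = m_0 ⊗ n_0 ⊗ n_1 m_1; in particular this coaction is well defined on the tensor product over H and satisfies the Yetter-Drinfeld compatibility rho(h(m ⊗ n)) = h_2 (m ⊗ n)_0 ⊗ h_3 (m ⊗ n)_1 S^{-1}(h_1). -/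
/-!
Common definitions for formalizing "Semisimplicity of the categories of
Yetter-Drinfeld modules and Long dimodules" (Caenepeel, Guédénon).
-/

open TensorProduct

noncomputable section
namespace YDPaper

section S18Aux
namespace S18

lemma combine_sum {γ : Type} (s t : Finset ℕ) (f g : ℕ → γ) (z : γ) :
    ∃ (u : Finset ℕ) (e : ℕ → γ), ∀ {α : Type} [AddCommMonoid α] (F : γ → α),
      ∑ i ∈ u, F (e i) = ∑ i ∈ s, F (f i) + ∑ i ∈ t, F (g i) := by
  classical
  set Nb := s.sup id + 1 with hNb
  refine ⟨s ∪ t.image (· + Nb), fun i => if i < Nb then f i else g (i - Nb), ?_⟩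
  intro α _ F
  have hdisj : Disjoint s (t.image (· + Nb)) := by
    rw [Finset.disjoint_right]
    rintro x hx hxs
    obtain ⟨j, hj, rfl⟩ := Finset.mem_image.1 hx
    have : j + Nb ≤ s.sup id := Finset.le_sup (f := id) hxs
    omega
  rw [Finset.sum_union hdisj, Finset.sum_image (by intro a _ b _ h2; exact Nat.add_right_cancel h2)]
  congr 1
  · refine Finset.sum_congr rfl fun i hi => ?_
    have h2 : id i ≤ s.sup id := Finset.le_sup (f := id) hi
    simp only [id] at h2
    have h3 : i < Nb := by omega
    simp only [h3, if_true]
  · refine Finset.sum_congr rfl fun j hj => ?_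
    have h3 : ¬ (j + Nb < Nb) := by omega
    simp only [h3, if_false, Nat.add_sub_cancel]

variable {k H : Type} [CommRing k] [CommRing H] [HopfAlgebra k H]

lemma exists_rep {A B : Type} [AddCommGroup A] [Module k A] [AddCommGroup B] [Module k B]
    (x : A ⊗[k] B) : ∃ (t : Finset ℕ) (a : ℕ → A) (b : ℕ → B),
      (∑ i ∈ t, a i ⊗ₜ[k] b i) = x := by
  induction x using TensorProduct.induction_on with
  | zero => exact ⟨∅, 0, 0, by simp⟩
  | tmul m h => exact ⟨{0}, fun _ => m, fun _ => h, by simp⟩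
  | add x y hx hy =>
    obtain ⟨s, a, b, hs⟩ := hx
    obtain ⟨t, c, d, ht⟩ := hy
    obtain ⟨u, e, he⟩ := combine_sum s t (fun i => (a i, b i)) (fun i => (c i, d i)) (0, 0)
    exact ⟨u, fun i => (e i).1, fun i => (e i).2, by
      rw [he (fun p : A × B => p.1 ⊗ₜ[k] p.2), hs, ht]⟩

lemma exists_rep₃ {A B C : Type} [AddCommGroup A] [Module k A] [AddCommGroup B] [Module k B]
    [AddCommGroup C] [Module k C] (x : (A ⊗[k] B) ⊗[k] C) :
    ∃ (t : Finset ℕ) (a : ℕ → A) (b : ℕ → B) (c : ℕ → C),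
      (∑ i ∈ t, (a i ⊗ₜ[k] b i) ⊗ₜ[k] c i) = x := by
  induction x using TensorProduct.induction_on with
  | zero => exact ⟨∅, 0, 0, 0, by simp⟩
  | tmul u cc =>
    obtain ⟨s, a, b, hs⟩ := exists_rep u
    refine ⟨s, a, b, fun _ => cc, ?_⟩
    rw [← hs, TensorProduct.sum_tmul]
  | add x y hx hy =>
    obtain ⟨s, a, b, c, hs⟩ := hx
    obtain ⟨t, a', b', c', ht⟩ := hy
    obtain ⟨u, e, he⟩ := combine_sum s t (fun i => (a i, b i, c i))
      (fun i => (a' i, b' i, c' i)) (0, 0, 0)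
    exact ⟨u, fun i => (e i).1, fun i => (e i).2.1, fun i => (e i).2.2, by
      rw [he (fun p : A × B × C => (p.1 ⊗ₜ[k] p.2.1) ⊗ₜ[k] p.2.2), hs, ht]⟩

variable (Sinv : H →ₗ[k] H)
variable {X : Type} [AddCommGroup X] [Module k X] [Module H X] [IsScalarTower k H X]
  [SMulCommClass H k X]

/-- `(a ⊗ b) ⊗ c` acting on `y ⊗ d` as `(b • y) ⊗ (c * (d * Sinv a))`. -/
def triv (a b c : H) : X ⊗[k] H →ₗ[k] X ⊗[k] H :=
  TensorProduct.map (smulMap k H b)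
    ((LinearMap.mulLeft k c).comp (LinearMap.mulRight k (Sinv a)))

lemma triv_tmul (a b c : H) (y : X) (d : H) :
    triv Sinv a b c (y ⊗ₜ[k] d) = (b • y) ⊗ₜ[k] (c * (d * Sinv a)) := rfl

def trivL (a b : H) : H →ₗ[k] (X ⊗[k] H →ₗ[k] X ⊗[k] H) where
  toFun c := triv Sinv a b c
  map_add' c c' := TensorProduct.ext' fun y d => by
    simp [triv_tmul, add_mul, TensorProduct.tmul_add]
  map_smul' r c := TensorProduct.ext' fun y d => by
    simp [triv_tmul, smul_mul_assoc, TensorProduct.tmul_smul]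

def trivB : H →ₗ[k] H →ₗ[k] H →ₗ[k] (X ⊗[k] H →ₗ[k] X ⊗[k] H) :=
  LinearMap.mk₂ k (fun a b => trivL Sinv a b)
    (fun a a' b => LinearMap.ext fun c => TensorProduct.ext' fun y d => by
      simp [trivL, triv_tmul, mul_add, TensorProduct.tmul_add])
    (fun r a b => LinearMap.ext fun c => TensorProduct.ext' fun y d => by
      simp [trivL, triv_tmul, mul_smul_comm, TensorProduct.tmul_smul])
    (fun a b b' => LinearMap.ext fun c => TensorProduct.ext' fun y d => by
      simp [trivL, triv_tmul, add_smul, TensorProduct.add_tmul])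
    (fun r a b => LinearMap.ext fun c => TensorProduct.ext' fun y d => by
      simp [trivL, triv_tmul, smul_assoc, TensorProduct.smul_tmul'])

def twF : (H ⊗[k] H) ⊗[k] H →ₗ[k] (X ⊗[k] H) →ₗ[k] X ⊗[k] H :=
  TensorProduct.lift (TensorProduct.lift (trivB Sinv))

lemma twF_tmul (a b c : H) (y : X) (d : H) :
    twF Sinv ((a ⊗ₜ[k] b) ⊗ₜ[k] c) (y ⊗ₜ[k] d) = (b • y) ⊗ₜ[k] (c * (d * Sinv a)) := by
  simp [twF, trivB, trivL, triv_tmul]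

lemma compat_pointwise {M : Type} [AddCommGroup M] [Module k M] [Module H M]
    [IsScalarTower k H M] [SMulCommClass H k M] {ρ : M →ₗ[k] M ⊗[k] H}
    (hc : IsYDCompat k H Sinv ρ) (h : H) (m : M) :
    ρ (h • m) = twF Sinv (Delta2 k H h) (ρ m) := by
  obtain ⟨s, a, b, c, hs⟩ := exists_rep₃ (Delta2 k H h)
  obtain ⟨t, m₀, m₁, ht⟩ := exists_rep (ρ m)
  rw [hc h m s t a b c m₀ m₁ hs ht, ← hs, ← ht]
  simp only [map_sum, LinearMap.sum_apply, twF_tmul, mul_assoc]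
  rw [Finset.sum_comm]

lemma isYDCompat_of_pointwise {M : Type} [AddCommGroup M] [Module k M] [Module H M]
    [IsScalarTower k H M] [SMulCommClass H k M] {ρ : M →ₗ[k] M ⊗[k] H}
    (hp : ∀ (h : H) (m : M), ρ (h • m) = twF Sinv (Delta2 k H h) (ρ m)) :
    IsYDCompat k H Sinv ρ := by
  intro h m s t a b c m₀ m₁ hs ht
  rw [hp h m, ← hs, ← ht]
  simp only [map_sum, LinearMap.sum_apply, twF_tmul, mul_assoc]
  rw [Finset.sum_comm]

variable {P Q : Type} [AddCommGroup P] [Module k P] [Module H P] [IsScalarTower k H P]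
  [SMulCommClass H k P] [AddCommGroup Q] [Module k Q] [Module H Q] [IsScalarTower k H Q]
  [SMulCommClass H k Q]

def mkH : P →ₗ[k] Q →ₗ[k] (P ⊗[H] Q) where
  toFun p :=
    { toFun := fun q => p ⊗ₜ[H] q
      map_add' := fun q q' => TensorProduct.tmul_add p q q'
      map_smul' := fun c q => by
        simp only [RingHom.id_apply]
        exact (TensorProduct.smul_tmul c p q).symm.trans
          (TensorProduct.smul_tmul' c p q).symm }
  map_add' p p' := LinearMap.ext fun q => TensorProduct.add_tmul p p' q
  map_smul' c p := LinearMap.ext fun q => by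
    simp only [LinearMap.coe_mk, AddHom.coe_mk, RingHom.id_apply, LinearMap.smul_apply]
    rw [TensorProduct.smul_tmul']

def Tgen (A : Type) [CommRing A] [Algebra k A] :
    (P ⊗[k] A) →ₗ[k] (Q ⊗[k] A) →ₗ[k] (P ⊗[H] Q) ⊗[k] A :=
  TensorProduct.curry
    ((TensorProduct.map (TensorProduct.lift mkH)
        ((LinearMap.mul' k A).comp (TensorProduct.comm k A A).toLinearMap)).comp
      (TensorProduct.tensorTensorTensorComm k P A Q A).toLinearMap)

lemma Tgen_tmul (A : Type) [CommRing A] [Algebra k A] (p : P) (a : A) (q : Q) (b : A) :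
    Tgen (P := P) (Q := Q) A (p ⊗ₜ[k] a) (q ⊗ₜ[k] b) = (p ⊗ₜ[H] q) ⊗ₜ[k] (b * a) := by
  simp [Tgen, mkH, TensorProduct.curry_apply]

lemma balance_right (u : (H ⊗[k] H) ⊗[k] H) (z : P ⊗[k] H) (w : Q ⊗[k] H) :
    Tgen H z (twF Sinv u w) = twF (X := P ⊗[H] Q) Sinv u (Tgen (P := P) (Q := Q) H z w) := by
  induction u using TensorProduct.induction_on with
  | zero => simp
  | add x y hx hy => simp [map_add, LinearMap.add_apply, hx, hy]
  | tmul v c =>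
    induction v using TensorProduct.induction_on with
    | zero => simp [TensorProduct.zero_tmul]
    | add v₁ v₂ h1 h2 =>
      simp only [TensorProduct.add_tmul, map_add, LinearMap.add_apply, h1, h2]
    | tmul a b =>
      induction z using TensorProduct.induction_on with
      | zero => simp
      | add z1 z2 h1 h2 => simp only [map_add, LinearMap.add_apply, h1, h2]
      | tmul p h₁ =>
        induction w using TensorProduct.induction_on with
        | zero => simp
        | add w1 w2 h1 h2 => simp only [map_add, LinearMap.add_apply, h1, h2]
        | tmul q h₂ =>
          rw [twF_tmul, Tgen_tmul, Tgen_tmul, twF_tmul, TensorProduct.smul_tmul',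
            TensorProduct.smul_tmul]
          congr 1
          ring

lemma balance_left (u : (H ⊗[k] H) ⊗[k] H) (z : P ⊗[k] H) (w : Q ⊗[k] H) :
    Tgen H (twF Sinv u z) w = twF (X := P ⊗[H] Q) Sinv u (Tgen (P := P) (Q := Q) H z w) := by
  induction u using TensorProduct.induction_on with
  | zero => simp
  | add x y hx hy => simp [map_add, LinearMap.add_apply, hx, hy]
  | tmul v c =>
    induction v using TensorProduct.induction_on with
    | zero => simp [TensorProduct.zero_tmul]
    | add v₁ v₂ h1 h2 =>
      simp only [TensorProduct.add_tmul, map_add, LinearMap.add_apply, h1, h2]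
    | tmul a b =>
      induction z using TensorProduct.induction_on with
      | zero => simp
      | add z1 z2 h1 h2 => simp only [map_add, LinearMap.add_apply, h1, h2]
      | tmul p h₁ =>
        induction w using TensorProduct.induction_on with
        | zero => simp
        | add w1 w2 h1 h2 => simp only [map_add, LinearMap.add_apply, h1, h2]
        | tmul q h₂ =>
          rw [twF_tmul, Tgen_tmul, Tgen_tmul, twF_tmul, TensorProduct.smul_tmul']
          congr 1
          ring

lemma counit_Tgen (x : P ⊗[k] H) (y : Q ⊗[k] H) :
    (TensorProduct.rid k (P ⊗[H] Q))
      ((LinearMap.lTensor (P ⊗[H] Q) (Coalgebra.counit (R := k) (A := H)))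
        (Tgen H x y)) =
    ((TensorProduct.rid k P) ((LinearMap.lTensor P (Coalgebra.counit (R := k) (A := H))) x))
      ⊗ₜ[H]
    ((TensorProduct.rid k Q) ((LinearMap.lTensor Q (Coalgebra.counit (R := k) (A := H))) y))
    := by
  induction x using TensorProduct.induction_on with
  | zero => simp
  | add x1 x2 h1 h2 =>
    simp only [map_add, LinearMap.add_apply, h1, h2, TensorProduct.add_tmul]
  | tmul p a =>
    induction y using TensorProduct.induction_on with
    | zero => simp
    | add y1 y2 h1 h2 =>
      simp only [map_add, h1, h2, TensorProduct.tmul_add]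
    | tmul q b =>
      rw [Tgen_tmul, LinearMap.lTensor_tmul, LinearMap.lTensor_tmul,
        LinearMap.lTensor_tmul, TensorProduct.rid_tmul, TensorProduct.rid_tmul,
        TensorProduct.rid_tmul, Bialgebra.counit_mul, mul_smul,
        TensorProduct.smul_tmul', TensorProduct.tmul_smul, TensorProduct.smul_tmul']

lemma assoc_Tgen (z : P ⊗[k] H) (w : Q ⊗[k] H) (h₁ h₂ : H) :
    (TensorProduct.assoc k (P ⊗[H] Q) H H) ((Tgen H z w) ⊗ₜ[k] (h₂ * h₁)) =
    Tgen (H ⊗[k] H) ((TensorProduct.assoc k P H H) (z ⊗ₜ[k] h₁))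
      ((TensorProduct.assoc k Q H H) (w ⊗ₜ[k] h₂)) := by
  induction z using TensorProduct.induction_on with
  | zero => simp
  | add z1 z2 h1 h2 =>
    simp only [map_add, LinearMap.add_apply, TensorProduct.add_tmul, h1, h2]
  | tmul p u =>
    induction w using TensorProduct.induction_on with
    | zero => simp
    | add w1 w2 h1 h2 =>
      simp only [map_add, LinearMap.add_apply, TensorProduct.add_tmul, h1, h2]
    | tmul q v =>
      rw [Tgen_tmul, TensorProduct.assoc_tmul, TensorProduct.assoc_tmul,
        TensorProduct.assoc_tmul, Tgen_tmul, Algebra.TensorProduct.tmul_mul_tmul]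

lemma lTensor_comul_Tgen (x : P ⊗[k] H) (y : Q ⊗[k] H) :
    (LinearMap.lTensor (P ⊗[H] Q) (Coalgebra.comul (R := k) (A := H))) (Tgen H x y) =
    Tgen (H ⊗[k] H) ((LinearMap.lTensor P (Coalgebra.comul (R := k) (A := H))) x)
      ((LinearMap.lTensor Q (Coalgebra.comul (R := k) (A := H))) y) := by
  induction x using TensorProduct.induction_on with
  | zero => simp
  | add x1 x2 h1 h2 => simp only [map_add, LinearMap.add_apply, h1, h2]
  | tmul p a =>
    induction y using TensorProduct.induction_on with
    | zero => simp
    | add y1 y2 h1 h2 => simp only [map_add, LinearMap.add_apply, h1, h2]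
    | tmul q b =>
      rw [Tgen_tmul, LinearMap.lTensor_tmul, LinearMap.lTensor_tmul,
        LinearMap.lTensor_tmul, Tgen_tmul, Bialgebra.comul_mul]

variable (M N : YDCat k H Sinv)

def rhoTAdd : M.M ⊗[H] N.M →+ (M.M ⊗[H] N.M) ⊗[k] H :=
  TensorProduct.liftAddHom
    (AddMonoidHom.mk' (fun m => AddMonoidHom.mk' (fun n => Tgen H (M.ρ m) (N.ρ n))
        (fun n n' => by simp only [map_add, LinearMap.add_apply]))
      (fun m m' => AddMonoidHom.ext fun n => by
        simp only [AddMonoidHom.mk'_apply, AddMonoidHom.add_apply]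
        simp only [map_add, LinearMap.add_apply]))
    (fun h m n => by
      simp only [AddMonoidHom.mk'_apply]
      rw [compat_pointwise Sinv M.compat, compat_pointwise Sinv N.compat,
        balance_left, balance_right])

def rhoT : (M.M ⊗[H] N.M) →ₗ[k] (M.M ⊗[H] N.M) ⊗[k] H where
  toFun := rhoTAdd Sinv M N
  map_add' := map_add _
  map_smul' c z := by
    simp only [RingHom.id_apply]
    induction z using TensorProduct.induction_on with
    | zero => rw [smul_zero, map_zero, smul_zero]
    | add x y hx hy => rw [smul_add, map_add, hx, hy, map_add, smul_add]
    | tmul m n =>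
      rw [TensorProduct.smul_tmul']
      show Tgen H (M.ρ (c • m)) (N.ρ n) = c • Tgen H (M.ρ m) (N.ρ n)
      rw [map_smul, map_smul, LinearMap.smul_apply]

lemma rhoT_tmul (m : M.M) (n : N.M) :
    rhoT Sinv M N (m ⊗ₜ[H] n) = Tgen H (M.ρ m) (N.ρ n) := rfl

lemma rhoT_comod : IsComod k H (rhoT Sinv M N) := by
  constructor
  · intro z
    induction z using TensorProduct.induction_on with
    | zero => simp
    | add x y hx hy => simp only [map_add, hx, hy]
    | tmul m n =>
      rw [rhoT_tmul, counit_Tgen, M.comod.1 m, N.comod.1 n]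
  · intro z
    have A : ∀ (x : M.M ⊗[k] H) (y : N.M ⊗[k] H),
        (TensorProduct.assoc k (M.M ⊗[H] N.M) H H)
          ((LinearMap.rTensor H (rhoT Sinv M N)) (Tgen H x y)) =
        Tgen (H ⊗[k] H) ((TensorProduct.assoc k M.M H H) ((LinearMap.rTensor H M.ρ) x))
          ((TensorProduct.assoc k N.M H H) ((LinearMap.rTensor H N.ρ) y)) := by
      intro x y
      induction x using TensorProduct.induction_on with
      | zero => simp
      | add x1 x2 h1 h2 => simp only [map_add, LinearMap.add_apply, h1, h2]
      | tmul m₀ h₁ =>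
        induction y using TensorProduct.induction_on with
        | zero => simp
        | add y1 y2 h1 h2 => simp only [map_add, LinearMap.add_apply, h1, h2]
        | tmul n₀ h₂ =>
          rw [Tgen_tmul, LinearMap.rTensor_tmul, rhoT_tmul, assoc_Tgen,
            LinearMap.rTensor_tmul, LinearMap.rTensor_tmul]
    induction z using TensorProduct.induction_on with
    | zero => simp
    | add x y hx hy => simp only [map_add, hx, hy]
    | tmul m n =>
      rw [rhoT_tmul, A (M.ρ m) (N.ρ n), M.comod.2 m, N.comod.2 n, lTensor_comul_Tgen]

lemma rhoT_char : TensorCoactChar Sinv M N (rhoT Sinv M N) := by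
  intro m n s t m₀ m₁ n₀ n₁ hm hn
  rw [rhoT_tmul, ← hm, ← hn]
  simp only [map_sum, LinearMap.sum_apply, Tgen_tmul]
  rw [Finset.sum_comm]

lemma rhoT_compat : IsYDCompat k H Sinv (rhoT Sinv M N) := by
  refine isYDCompat_of_pointwise Sinv fun h z => ?_
  induction z using TensorProduct.induction_on with
  | zero => rw [smul_zero, map_zero, map_zero]
  | add x y hx hy => rw [smul_add, map_add, hx, hy, map_add, map_add]
  | tmul m n =>
    rw [TensorProduct.smul_tmul', rhoT_tmul, rhoT_tmul,
      compat_pointwise Sinv M.compat, balance_left]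

end S18

end S18Aux

/-- Lemma 1.2(1). Let `H` be a commutative Hopf algebra with
bijective antipode over a commutative ring `k`, faithfully flat over `k`, and let
`M`, `N` be Yetter-Drinfeld modules. Then `M ⊗_H N` is a Yetter-Drinfeld module with
`H`-action `h(m ⊗ n) = hm ⊗ n = m ⊗ hn` and well-defined right `H`-coaction
`ρ(m ⊗ n) = m₀ ⊗ n₀ ⊗ n₁ m₁`, satisfying the Yetter-Drinfeld compatibility. -/
theorem tensorH_is_YetterDrinfeld_module
    (k H : Type) [CommRing k] [CommRing H] [HopfAlgebra k H]
    [Module.FaithfullyFlat k H]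
    (Sinv : H →ₗ[k] H)
    (hS1 : ∀ h : H, Sinv (HopfAlgebra.antipode (R := k) (A := H) h) = h)
    (hS2 : ∀ h : H, HopfAlgebra.antipode (R := k) (A := H) (Sinv h) = h)
    (M N : YDCat k H Sinv) :
    (∀ (h : H) (m : M.M) (n : N.M),
      h • (m ⊗ₜ[H] n) = (h • m) ⊗ₜ[H] n ∧ h • (m ⊗ₜ[H] n) = m ⊗ₜ[H] (h • n)) ∧
    ∃ ρT : (M.M ⊗[H] N.M) →ₗ[k] (M.M ⊗[H] N.M) ⊗[k] H,
      IsComod k H ρT ∧ TensorCoactChar Sinv M N ρT ∧ IsYDCompat k H Sinv ρT := by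
  refine ⟨fun h m n => ?_, S18.rhoT Sinv M N, S18.rhoT_comod Sinv M N,
    S18.rhoT_char Sinv M N, S18.rhoT_compat Sinv M N⟩
  exact ⟨TensorProduct.smul_tmul' h m n,
    (TensorProduct.smul_tmul' h m n).trans (TensorProduct.smul_tmul h m n)⟩
end YDPaper
end
end
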